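/- arXiv:math/0701529 — 4 statements merged into one kernel-verified Lean document; each statement's English description precedes it below -/
import Mathlib

section
/- With S as in situation (6) and α, β ∈ K^d with β − α ∈ ℤ^d and τ a face: α ∼_{S,τ} β (i.e., E(S)_{τ'}(α) = E(S)_{τ'}(β) for all faces τ' ⊇ τ) if and only if 𝕀(τ) + α ∼_S 𝕀(τ) + β (i.e., both 𝕀(τ)+α ≼_S 𝕀(τ)+β and 𝕀(τ)+β ≼_S 𝕀(τ)+α in the preorder ≼_S). -/
open Function

/-- Lattice `ℤ^d`. -/
abbrev Zd (d : ℕ) := Fin d → ℤ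

noncomputable section

namespace SaitoTakahashi

variable {d : ℕ}

/-- The affine semigroup `ℕA` generated by the finite set `A ⊆ ℤ^d`. -/
def NA (A : Finset (Zd d)) : AddSubmonoid (Zd d) := AddSubmonoid.closure (A : Set (Zd d))

/-- The group `ℤA` generated by `A`. -/
def ZA (A : Finset (Zd d)) : AddSubgroup (Zd d) := AddSubgroup.closure (A : Set (Zd d))

/-- Realification of a lattice point. -/
def toR (a : Zd d) : Fin d → ℝ := fun i => (a i : ℝ)

/-- The real cone `ℝ≥0 A`. -/
def coneOf (A : Finset (Zd d)) : Set (Fin d → ℝ) :=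
  { x | ∃ c : Zd d → ℝ, (∀ a, 0 ≤ c a) ∧ x = ∑ a ∈ A, c a • toR a }

/-- The cone `ℝ≥0 A` is strongly convex. -/
def StronglyConvex (A : Finset (Zd d)) : Prop :=
  ∀ x ∈ coneOf A, -x ∈ coneOf A → x = 0

/-- `B = A ∩ τ` for a face `τ` of the cone `ℝ≥0 A`, i.e. `B` is the subset of `A`
cut out by an integral supporting functional which is nonnegative on `A`. -/
def IsFace (A B : Finset (Zd d)) : Prop :=
  ∃ G : Zd d →+ ℤ, B ⊆ A ∧ (∀ a ∈ A, 0 ≤ G a) ∧ ∀ a ∈ A, (G a = 0 ↔ a ∈ B)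

/-- `F` is the primitive integral support function of a facet of `ℝ≥0 A`:
nonnegative on the cone, surjective onto `ℤ` (primitivity, using `ℤA = ℤ^d`),
and its zero set in the cone is a face of dimension `d - 1`. -/
def IsFacetFn (A : Finset (Zd d)) (F : Zd d →+ ℤ) : Prop :=
  (∀ a ∈ A, 0 ≤ F a) ∧ Surjective F ∧
    Module.finrank ℝ ↥(Submodule.span ℝ (toR '' {a : Zd d | a ∈ A ∧ F a = 0})) = d - 1

/-- The set `A ∩ σ` for the facet with primitive integral support function `F`. -/
def facetSet (A : Finset (Zd d)) (F : Zd d →+ ℤ) : Finset (Zd d) :=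
  A.filter fun a => F a = 0

/-- `S` is an `ℕA`-set: `S + ℕA ⊆ S`. -/
def IsNASet (A : Finset (Zd d)) (S : Set (Zd d)) : Prop :=
  ∀ s ∈ S, ∀ a ∈ NA A, s + a ∈ S

/-- `S` is a finitely generated `ℕA`-set. -/
def IsFGNASet (A : Finset (Zd d)) (S : Set (Zd d)) : Prop :=
  IsNASet A S ∧ ∃ G : Finset (Zd d), S = { x | ∃ g ∈ G, ∃ a ∈ NA A, x = g + a }

/-- `S` is scored: `S = ⋂_{σ facet} { a ∈ ℤ^d : F_σ(a) ∈ F_σ(S) }`. -/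
def IsScored (A : Finset (Zd d)) (S : Set (Zd d)) : Prop :=
  S = { x : Zd d | ∀ F : Zd d →+ ℤ, IsFacetFn A F → F x ∈ F '' S }

/-- `S + ℤ(A ∩ τ)` where `B = A ∩ τ`. -/
def plusZ (S : Set (Zd d)) (B : Finset (Zd d)) : Set (Zd d) :=
  { x | ∃ s ∈ S, ∃ z ∈ AddSubgroup.closure (B : Set (Zd d)), x = s + z }

/-- The coset `b + ℤ(A ∩ τ)` where `B = A ∩ τ`. -/
def coset (b : Zd d) (B : Finset (Zd d)) : Set (Zd d) :=
  { x | x - b ∈ AddSubgroup.closure (B : Set (Zd d)) }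

/-- The standard-expression setting of the paper:
`S = S_c \ ⋃ᵢ (bᵢ + ℤ(A∩τᵢ))`, where `S_c` is a finitely generated scored
`ℕA`-set (the scored closure of `S`), `bᵢ ∈ S_c`, the `τᵢ` are faces of `ℝ≥0 A`
(encoded by `Bf i = A ∩ τᵢ`), and `F_σ(S) = F_σ(S_c)` for every facet `σ`. -/
structure Setting (A : Finset (Zd d)) (Sc S : Set (Zd d)) {m : ℕ}
    (b : Fin m → Zd d) (Bf : Fin m → Finset (Zd d)) : Prop where
  latt : ZA A = ⊤
  convex : StronglyConvex A
  fg : IsFGNASet A Sc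
  scored : IsScored A Sc
  bIn : ∀ i, b i ∈ Sc
  face : ∀ i, IsFace A (Bf i)
  expr : S = Sc \ ⋃ i, coset (b i) (Bf i)
  sameF : ∀ F : Zd d →+ ℤ, IsFacetFn A F → F '' S = F '' Sc

/-- The expression `S = S_c \ ⋃ᵢ (bᵢ + ℤ(A∩τᵢ))` is irredundant. -/
def Irredundant (Sc S : Set (Zd d)) {m : ℕ}
    (b : Fin m → Zd d) (Bf : Fin m → Finset (Zd d)) : Prop :=
  ∀ i, Sc \ ⋃ j, ⋃ (_ : j ≠ i), coset (b j) (Bf j) ≠ S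

section Kside

variable (K : Type) [Field K]

/-- A lattice point as a point of `K^d`. -/
def toK (a : Zd d) : Fin d → K := fun i => (a i : K)

/-- The vanishing ideal `𝕀(V) ⊆ K[s₁,…,s_d]` of a subset `V ⊆ K^d`. -/
def vIdeal (V : Set (Fin d → K)) : Ideal (MvPolynomial (Fin d) K) :=
  ⨅ v ∈ V, RingHom.ker (MvPolynomial.eval v)

/-- `Ω_{S,S'}(a) = S \ (−a + S')`. -/
def Omega (S S' : Set (Zd d)) (a : Zd d) : Set (Zd d) := S \ { x | a + x ∈ S' }

/-- The `K`-algebra map `f(s) ↦ f(s − c)`. -/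
def shiftHom (c : Fin d → K) : MvPolynomial (Fin d) K →+* MvPolynomial (Fin d) K :=
  MvPolynomial.eval₂Hom MvPolynomial.C (fun i => MvPolynomial.X i - MvPolynomial.C (c i))

/-- The translate `I + c = { f(s − c) : f ∈ I }` of an ideal of `K[s]`. -/
def shiftIdeal (I : Ideal (MvPolynomial (Fin d) K)) (c : Fin d → K) :
    Ideal (MvPolynomial (Fin d) K) :=
  I.map (shiftHom K c)

/-- The `K`-span `Kτ` of a face, where `B = A ∩ τ`. -/
def spanK (B : Finset (Zd d)) : Submodule K (Fin d → K) :=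
  Submodule.span K (toK K '' (B : Set (Zd d)))

/-- `lam` is (a representative of) an element of `E(S)_τ(α)`:
`lam ∈ Kτ` and `α − lam ∈ S + ℤ(A∩τ)`, where `B = A ∩ τ`. -/
def memE (S : Set (Zd d)) (B : Finset (Zd d)) (α lam : Fin d → K) : Prop :=
  lam ∈ spanK K B ∧
    ∃ s ∈ S, ∃ z ∈ AddSubgroup.closure (B : Set (Zd d)), α - lam = toK K s + toK K z

/-- The `K`-linear extension of an integral linear form `F` to `K^d`. -/
def FK (F : Zd d →+ ℤ) (v : Fin d → K) : K :=
  ∑ i, ((F (Pi.single i 1) : ℤ) : K) * v i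

/-- The affine translate `α + Kτ ⊆ K^d`, where `B = A ∩ τ`. -/
def aff (α : Fin d → K) (B : Finset (Zd d)) : Set (Fin d → K) :=
  { x | ∃ lam ∈ spanK K B, x = α + lam }

end Kside

end SaitoTakahashi

namespace SaitoTakahashi

/-! ### Auxiliary development -/

section Aux

variable {d : ℕ} (K : Type) [Field K] [CharZero K]

set_option linter.unusedSectionVars false

open MvPolynomial

lemma toK_add (a b : Zd d) : toK K (a + b) = toK K a + toK K b := by
  funext i; simp [toK]

lemma toK_zero : toK K (0 : Zd d) = 0 := by funext i; simp [toK]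

lemma toK_neg (a : Zd d) : toK K (-a) = - toK K a := by
  funext i; simp [toK]

lemma toK_sub (a b : Zd d) : toK K (a - b) = toK K a - toK K b := by
  funext i; simp [toK]

lemma toK_injective : Function.Injective (toK (d := d) K) := by
  intro a b h
  funext i
  have := congrFun h i
  simpa [toK] using this

lemma toK_mem_spanK {B : Finset (Zd d)} {z : Zd d}
    (hz : z ∈ AddSubgroup.closure (B : Set (Zd d))) :
    toK K z ∈ spanK K B := by
  induction hz using AddSubgroup.closure_induction with
  | mem x hx => exact Submodule.subset_span ⟨x, hx, rfl⟩
  | zero => rw [toK_zero]; exact Submodule.zero_mem _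
  | add x y _ _ hx hy => rw [toK_add]; exact Submodule.add_mem _ hx hy
  | neg x _ hx => rw [toK_neg]; exact Submodule.neg_mem _ hx

lemma spanK_mono {B B' : Finset (Zd d)} (h : B ⊆ B') : spanK K B ≤ spanK K B' :=
  Submodule.span_mono (Set.image_mono (by exact_mod_cast h))

lemma mem_vIdeal {V : Set (Fin d → K)} {f : MvPolynomial (Fin d) K} :
    f ∈ vIdeal K V ↔ ∀ v ∈ V, MvPolynomial.eval v f = 0 := by
  simp [vIdeal, Ideal.mem_iInf, RingHom.mem_ker]

/-- The witness predicate: `s ∈ S` with `α - s ∈ KB'` and `s + c + ℤB'` disjoint from `S`. -/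
def Wit (S : Set (Zd d)) (B' : Finset (Zd d)) (α : Fin d → K) (c : Zd d) : Prop :=
  ∃ s ∈ S, α - toK K s ∈ spanK K B' ∧
    ∀ z ∈ AddSubgroup.closure (B' : Set (Zd d)), s + c + z ∉ S

lemma exists_memE_not_memE_iff_wit (S : Set (Zd d)) (B' : Finset (Zd d))
    (γ : Fin d → K) (c : Zd d) :
    (∃ lam, memE K S B' γ lam ∧ ¬ memE K S B' (γ + toK K c) lam) ↔ Wit K S B' γ c := by
  constructor
  · rintro ⟨lam, ⟨hlam, s, hs, z, hz, heq⟩, hnot⟩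
    refine ⟨s, hs, ?_, ?_⟩
    · have hγ : γ = toK K s + toK K z + lam := by rw [← heq]; abel
      have : γ - toK K s = lam + toK K z := by rw [hγ]; abel
      rw [this]
      exact Submodule.add_mem _ hlam (toK_mem_spanK K hz)
    · intro w hw hmem
      apply hnot
      have hγ : γ = toK K s + toK K z + lam := by rw [← heq]; abel
      refine ⟨hlam, s + c + w, hmem, z - w, AddSubgroup.sub_mem _ hz hw, ?_⟩
      rw [toK_add, toK_add, toK_sub, hγ]
      abel
  · rintro ⟨s, hs, hspan, hdisj⟩
    refine ⟨γ - toK K s, ⟨hspan, s, hs, 0, AddSubgroup.zero_mem _, by rw [toK_zero]; abel⟩, ?_⟩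
    rintro ⟨-, s', hs', z', hz', heq⟩
    -- γ + c - (γ - s) = s + c  = s' + z'
    have h2 : toK K (s + c) = toK K (s' + z') := by
      rw [toK_add, toK_add]
      have : γ + toK K c - (γ - toK K s) = toK K s + toK K c := by abel
      rw [this] at heq
      rw [heq]
    have h3 : s + c = s' + z' := toK_injective K h2
    exact hdisj (-z') (AddSubgroup.neg_mem _ hz') (by
      have : s + c + -z' = s' := by rw [h3]; abel
      rwa [this])

lemma lhs_iff_not_wit (S : Set (Zd d)) (B' : Finset (Zd d)) (α : Fin d → K) (c : Zd d) :
    (∀ lam, (memE K S B' α lam ↔ memE K S B' (α + toK K c) lam)) ↔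
      ¬ (Wit K S B' α c ∨ Wit K S B' (α + toK K c) (-c)) := by
  rw [← exists_memE_not_memE_iff_wit, ← exists_memE_not_memE_iff_wit]
  have hαc : α + toK K c + toK K (-c) = α := by rw [toK_neg]; abel
  rw [hαc]
  constructor
  · intro h hw
    rcases hw with ⟨lam, h1, h2⟩ | ⟨lam, h1, h2⟩
    · exact h2 ((h lam).1 h1)
    · exact h2 ((h lam).2 h1)
  · intro h lam
    constructor
    · intro hm; by_contra hn; exact h (Or.inl ⟨lam, hm, hn⟩)
    · intro hm; by_contra hn; exact h (Or.inr ⟨lam, hm, hn⟩)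

end Aux
section GridDensity

variable {K : Type} [Field K] [CharZero K]

set_option linter.unusedSectionVars false

open MvPolynomial

/-- A multivariate polynomial over a char-zero field vanishing at all natural points is zero. -/
lemma eval_natGrid_eq_zero : ∀ {k : ℕ} (g : MvPolynomial (Fin k) K),
    (∀ t : Fin k → ℕ, MvPolynomial.eval (fun i => (t i : K)) g = 0) → g = 0 := by
  intro k
  induction k with
  | zero =>
    intro g h
    obtain ⟨r, rfl⟩ := MvPolynomial.C_surjective (Fin 0) g
    have := h (fun _ => 0)
    rw [MvPolynomial.eval_C] at this
    rw [this, map_zero]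
  | succ n ih =>
    intro g h
    set q := MvPolynomial.finSuccEquiv K n g with hqdef
    have hq : ∀ j, q.coeff j = 0 := by
      intro j
      apply ih
      intro s
      have hp : Polynomial.map (MvPolynomial.eval fun i => (s i : K)) q = 0 := by
        apply Polynomial.eq_zero_of_infinite_isRoot
        apply Set.infinite_of_injective_forall_mem (f := fun y : ℕ => (y : K))
          Nat.cast_injective
        intro y
        show Polynomial.IsRoot _ _
        show Polynomial.eval (y : K) (Polynomial.map (MvPolynomial.eval fun i => (s i : K)) q) = 0
        rw [hqdef, ← MvPolynomial.eval_eq_eval_mv_eval']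
        have h2 := h (Fin.cons y s)
        have h3 : (fun i => ((Fin.cons y s : Fin (n+1) → ℕ) i : K)) =
            Fin.cons (y : K) (fun i => (s i : K)) := by
          funext i; refine Fin.cases ?_ ?_ i <;> simp
        rwa [h3] at h2
      have := congrArg (fun p => Polynomial.coeff p j) hp
      simpa [Polynomial.coeff_map] using this
    have hq0 : q = 0 := Polynomial.ext fun j => by rw [hq j, Polynomial.coeff_zero]
    apply (MvPolynomial.finSuccEquiv K n).injective
    rw [map_zero, ← hqdef]; exact hq0

/-- Clearing denominators: if the `ℚ`-span of (the image of) a subgroup `L ≤ ℤᵏ` is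
everything, then `L` contains `N • ℤᵏ` for some positive `N`. -/
lemma exists_nsmul_mem_of_spanQ_top {k : ℕ} (L : AddSubgroup (Fin k → ℤ))
    (h : Submodule.span ℚ ((fun z : Fin k → ℤ => fun j => ((z j : ℚ))) '' (L : Set (Fin k → ℤ))) = ⊤) :
    ∃ N : ℕ, 0 < N ∧ ∀ x : Fin k → ℤ, (N : ℤ) • x ∈ L := by
  classical
  set cQ : (Fin k → ℤ) → (Fin k → ℚ) := fun z => fun j => ((z j : ℚ)) with hcQ
  have cQ_add : ∀ a b, cQ (a + b) = cQ a + cQ b := by intro a b; funext j; simp [cQ]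
  have cQ_zsmul : ∀ (m : ℤ) a, cQ (m • a) = (m : ℚ) • cQ a := by
    intro m a; funext j; simp [cQ]
  have cQ_inj : Function.Injective cQ := fun a b hab =>
    funext fun j => Int.cast_injective (α := ℚ) (congrFun hab j)
  have key : ∀ w ∈ Submodule.span ℚ (cQ '' (L : Set (Fin k → ℤ))),
      ∃ n : ℕ, 0 < n ∧ ∃ l ∈ L, cQ l = (n : ℚ) • w := by
    intro w hw
    induction hw using Submodule.span_induction with
    | mem x hx =>
      obtain ⟨l, hl, rfl⟩ := hx
      exact ⟨1, one_pos, l, hl, by simp⟩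
    | zero => exact ⟨1, one_pos, 0, AddSubgroup.zero_mem _, by funext j; simp [cQ]⟩
    | add x y _ _ hx hy =>
      obtain ⟨n₁, hn₁, l₁, hl₁, he₁⟩ := hx
      obtain ⟨n₂, hn₂, l₂, hl₂, he₂⟩ := hy
      refine ⟨n₁ * n₂, Nat.mul_pos hn₁ hn₂,
        (n₂ : ℤ) • l₁ + (n₁ : ℤ) • l₂,
        AddSubgroup.add_mem _ (AddSubgroup.zsmul_mem _ hl₁ _) (AddSubgroup.zsmul_mem _ hl₂ _), ?_⟩
      rw [cQ_add, cQ_zsmul, cQ_zsmul, he₁, he₂]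
      have e1 : ((n₂ : ℤ) : ℚ) = (n₂ : ℚ) := by push_cast; ring
      have e2 : ((n₁ : ℤ) : ℚ) = (n₁ : ℚ) := by push_cast; ring
      rw [e1, e2, smul_smul, smul_smul]
      have e3 : ((n₂ : ℚ) * (n₁ : ℚ)) = ((n₁ * n₂ : ℕ) : ℚ) := by push_cast; ring
      have e4 : ((n₁ : ℚ) * (n₂ : ℚ)) = ((n₁ * n₂ : ℕ) : ℚ) := by push_cast; ring
      rw [e3, e4, ← smul_add]
    | smul q x _ hx =>
      obtain ⟨n, hn, l, hl, he⟩ := hx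
      refine ⟨n * q.den, Nat.mul_pos hn q.pos, q.num • l, AddSubgroup.zsmul_mem _ hl _, ?_⟩
      rw [cQ_zsmul, he, smul_smul, smul_smul]
      congr 1
      have hqden : (q.den : ℚ) * q = (q.num : ℚ) := by
        have hy := Rat.num_div_den q
        have hd : (q.den : ℚ) ≠ 0 := by exact_mod_cast q.den_nz
        calc (q.den : ℚ) * q = (q.den : ℚ) * ((q.num : ℚ) / (q.den : ℚ)) := by rw [hy]
        _ = (q.num : ℚ) := by field_simp
      push_cast
      linear_combination (-(n : ℚ)) * hqden
  have hsingle : ∀ j : Fin k, ∃ n : ℕ, 0 < n ∧ (n : ℤ) • Pi.single j (1 : ℤ) ∈ L := by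
    intro j
    obtain ⟨n, hn, l, hl, he⟩ := key (Pi.single j (1 : ℚ)) (by rw [h]; trivial)
    refine ⟨n, hn, ?_⟩
    have hone : cQ (Pi.single j (1 : ℤ)) = Pi.single j (1 : ℚ) := by
      funext i; by_cases hij : i = j <;> simp [cQ, Pi.single_apply, hij]
    have hl' : l = (n : ℤ) • Pi.single j (1 : ℤ) := by
      apply cQ_inj
      rw [he, cQ_zsmul, hone]
      norm_cast
    rwa [hl'] at hl
  choose n hnpos hnmem using hsingle
  refine ⟨∏ j, n j, Finset.prod_pos (fun j _ => hnpos j), ?_⟩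
  intro x
  have hdvd : ∀ j : Fin k, n j ∣ ∏ i, n i := fun j => Finset.dvd_prod_of_mem _ (Finset.mem_univ j)
  have hx : ((∏ j, n j : ℕ) : ℤ) • x =
      ∑ j, ((((∏ i, n i) / n j : ℕ) : ℤ) * x j) • ((n j : ℤ) • Pi.single j (1 : ℤ)) := by
    funext i
    rw [Finset.sum_apply]
    rw [Finset.sum_eq_single i]
    · have hcan : ((((∏ i, n i) / n i : ℕ) : ℤ)) * ((n i : ℕ) : ℤ) = ((∏ i, n i : ℕ) : ℤ) := by
        exact_mod_cast congrArg (Nat.cast : ℕ → ℤ) (Nat.div_mul_cancel (hdvd i))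
      simp only [Pi.smul_apply, smul_eq_mul, Pi.single_apply, eq_self_iff_true, if_true, mul_one]
      linear_combination (-(x i)) * hcan
    · intro j _ hji
      simp [Pi.single_apply, if_neg (Ne.symm hji)]
    · intro hi; exact absurd (Finset.mem_univ i) hi
  rw [hx]
  exact AddSubgroup.sum_mem _ fun j _ => AddSubgroup.zsmul_mem _ (hnmem j) _

/-- Separating a point from a submodule by a dual functional. -/
lemma dual_sep {K V : Type*} [Field K] [AddCommGroup V] [Module K V]
    (U : Submodule K V) (x : V) (hx : x ∉ U) :
    ∃ f : V →ₗ[K] K, (∀ u ∈ U, f u = 0) ∧ f x = 1 := by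
  have hxq : U.mkQ x ≠ 0 := by
    rw [Submodule.mkQ_apply, ne_eq, Submodule.Quotient.mk_eq_zero]
    exact hx
  obtain ⟨φ, hφ⟩ : ∃ φ : Module.Dual K (V ⧸ U), φ (U.mkQ x) ≠ 0 := by
    by_contra hcon
    push_neg at hcon
    exact hxq ((Module.forall_dual_apply_eq_zero_iff K _).1 hcon)
  refine ⟨(φ (U.mkQ x))⁻¹ • (φ.comp U.mkQ), ?_, ?_⟩
  · intro u hu
    have : U.mkQ u = 0 := by rw [Submodule.mkQ_apply, Submodule.Quotient.mk_eq_zero]; exact hu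
    simp [this]
  · simp only [LinearMap.smul_apply, LinearMap.comp_apply, smul_eq_mul]
    exact inv_mul_cancel₀ hφ

/-- An integral functional vanishing on a subgroup whose `ℚ`-span is not everything. -/
lemma exists_int_functional_of_spanQ_ne_top {k : ℕ} (L : AddSubgroup (Fin k → ℤ))
    (h : Submodule.span ℚ ((fun z : Fin k → ℤ => fun j => ((z j : ℚ))) '' (L : Set (Fin k → ℤ))) ≠ ⊤) :
    ∃ w : Fin k → ℤ, w ≠ 0 ∧ ∀ l ∈ L, (∑ j, w j * l j) = 0 := by
  classical
  set cQ : (Fin k → ℤ) → (Fin k → ℚ) := fun z => fun j => ((z j : ℚ)) with hcQ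
  set U := Submodule.span ℚ (cQ '' (L : Set (Fin k → ℤ))) with hU
  obtain ⟨x, hx⟩ : ∃ x, x ∉ U := by
    by_contra hcon
    push_neg at hcon
    exact h (Submodule.eq_top_iff'.2 hcon)
  obtain ⟨φ, hφU, hφx⟩ := dual_sep U x hx
  set D : ℕ := ∏ j, (φ (Pi.single j 1)).den with hD
  have hDpos : 0 < D := Finset.prod_pos fun j _ => (φ (Pi.single j 1)).pos
  have hden : ∀ j : Fin k, ((φ (Pi.single j 1)).den : ℕ) ∣ D :=
    fun j => Finset.dvd_prod_of_mem _ (Finset.mem_univ j)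
  set w : Fin k → ℤ := fun j => ((D / (φ (Pi.single j 1)).den : ℕ) : ℤ) * (φ (Pi.single j 1)).num
    with hw
  have hwcast : ∀ j : Fin k, ((w j : ℚ)) = (D : ℚ) * φ (Pi.single j 1) := by
    intro j
    set r := φ (Pi.single j 1) with hr
    have h1 : (r.den : ℚ) * r = (r.num : ℚ) := by
      have hy := Rat.num_div_den r
      have hd : (r.den : ℚ) ≠ 0 := by exact_mod_cast r.den_nz
      calc (r.den : ℚ) * r = (r.den : ℚ) * ((r.num : ℚ) / (r.den : ℚ)) := by rw [hy]
      _ = (r.num : ℚ) := by field_simp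
    have h2 : (((D / r.den : ℕ) : ℚ)) * ((r.den : ℕ) : ℚ) = (D : ℚ) := by
      exact_mod_cast congrArg (Nat.cast : ℕ → ℚ) (Nat.div_mul_cancel (hden j))
    show (((((D / r.den : ℕ) : ℤ)) * r.num : ℤ) : ℚ) = (D : ℚ) * r
    rw [Int.cast_mul, Int.cast_natCast]
    linear_combination (-(((D / r.den : ℕ) : ℚ))) * h1 + r * h2
  have expand : ∀ y : Fin k → ℚ, φ y = ∑ j, y j * φ (Pi.single j 1) := by
    intro y
    rw [LinearMap.pi_apply_eq_sum_univ φ y]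
    apply Finset.sum_congr rfl
    intro i _
    rw [smul_eq_mul]
    congr 2
    funext j
    rw [Pi.single_apply]
    by_cases hij : i = j
    · simp [hij]
    · simp [hij, Ne.symm hij]
  refine ⟨w, ?_, ?_⟩
  · -- w ≠ 0
    intro hw0
    have hx0 : φ x = 0 := by
      rw [expand x]
      apply Finset.sum_eq_zero
      intro j _
      have hwj : w j = 0 := congrFun hw0 j
      have h0 : (D : ℚ) * φ (Pi.single j 1) = 0 := by
        rw [← hwcast j, hwj]; simp
      rcases mul_eq_zero.1 h0 with hcase | hcase
      · exact absurd hcase (by positivity)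
      · rw [hcase, mul_zero]
    rw [hx0] at hφx
    exact zero_ne_one hφx
  · intro l hl
    have hQ : (↑(∑ j, w j * l j) : ℚ) = 0 := by
      push_cast
      have hterm : ∀ j : Fin k, ((w j : ℚ)) * (l j : ℚ) = (D : ℚ) * ((l j : ℚ) * φ (Pi.single j 1)) := by
        intro j; rw [hwcast j]; ring
      rw [Finset.sum_congr rfl fun j _ => hterm j, ← Finset.mul_sum]
      have hker : φ (cQ l) = 0 := hφU _ (Submodule.subset_span ⟨l, hl, rfl⟩)
      rw [expand (cQ l)] at hker
      simp only [cQ] at hker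
      rw [hker, mul_zero]
    exact_mod_cast hQ

end GridDensity
section LemZ

variable {K : Type} [Field K] [CharZero K]

set_option linter.unusedSectionVars false
set_option maxHeartbeats 1000000

open MvPolynomial

lemma aeval_eq_eval' {σ : Type*} (x : σ → K) (p : MvPolynomial σ K) :
    MvPolynomial.aeval x p = MvPolynomial.eval x p := by
  rw [MvPolynomial.aeval_def, Algebra.algebraMap_self]
  rfl

lemma eval_bind₁' {k k' : ℕ} (x : Fin k → K) (f : Fin k' → MvPolynomial (Fin k) K)
    (p : MvPolynomial (Fin k') K) :
    MvPolynomial.eval x (MvPolynomial.bind₁ f p) =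
      MvPolynomial.eval (fun i => MvPolynomial.eval x (f i)) p := by
  rw [← aeval_eq_eval', ← aeval_eq_eval']
  rw [MvPolynomial.aeval_bind₁]
  congr 1

/-- The key density lemma: a polynomial vanishing on the natural grid points avoiding
finitely many coset obstructions (none of which passes through the origin) is zero. -/
lemma lemZ {k : ℕ} {ι : Type} (I : Finset ι) (v : ι → (Fin k → ℤ))
    (L : ι → AddSubgroup (Fin k → ℤ))
    (h0 : ∀ i ∈ I, -(v i) ∉ L i) (g : MvPolynomial (Fin k) K)
    (hvan : ∀ t : Fin k → ℕ, (∀ i ∈ I, ¬((fun j => ((t j : ℤ))) - v i ∈ L i)) →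
      MvPolynomial.eval (fun j => ((t j : K))) g = 0) : g = 0 := by
  classical
  haveI : Infinite K := Infinite.of_injective (fun n : ℕ => (n : K)) Nat.cast_injective
  set QL : ι → Prop := fun i =>
    Submodule.span ℚ ((fun z : Fin k → ℤ => fun j => ((z j : ℚ))) '' ((L i) : Set (Fin k → ℤ))) = ⊤
    with hQL
  set IF := I.filter (fun i => QL i) with hIF
  set IP := I.filter (fun i => ¬ QL i) with hIP
  have hNex : ∀ i : {x // x ∈ IF}, ∃ N : ℕ, 0 < N ∧ ∀ x : Fin k → ℤ, (N:ℤ) • x ∈ L i := by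
    rintro ⟨i, hi⟩
    exact exists_nsmul_mem_of_spanQ_top (L i) ((Finset.mem_filter.1 hi).2)
  choose Nf hNfpos hNfmem using hNex
  set N : ℕ := ∏ i ∈ IF.attach, Nf i with hN
  have hNpos : 0 < N := Finset.prod_pos fun i _ => hNfpos i
  have hNmem : ∀ i, ∀ hi : i ∈ IF, ∀ x : Fin k → ℤ, (N:ℤ) • x ∈ L i := by
    intro i hi x
    obtain ⟨c, hc⟩ : Nf ⟨i, hi⟩ ∣ N := Finset.dvd_prod_of_mem Nf (Finset.mem_attach IF ⟨i, hi⟩)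
    have : (N:ℤ) • x = (Nf ⟨i,hi⟩ : ℤ) • ((c:ℤ) • x) := by
      rw [smul_smul]
      have hcc : ((Nf ⟨i,hi⟩ : ℕ) : ℤ) * (c : ℤ) = (N : ℤ) := by
        exact_mod_cast congrArg (Nat.cast : ℕ → ℤ) hc.symm
      rw [hcc]
    rw [this]
    exact hNfmem ⟨i,hi⟩ _
  have hwex : ∀ i : {x // x ∈ IP}, ∃ w : Fin k → ℤ, w ≠ 0 ∧
      ∀ l ∈ L i.1, (∑ j, w j * l j) = 0 := by
    rintro ⟨i, hi⟩
    exact exists_int_functional_of_spanQ_ne_top (L i) ((Finset.mem_filter.1 hi).2)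
  choose w hwne hwperp using hwex
  -- the scaled polynomial and the linear factors
  set gN : MvPolynomial (Fin k) K := MvPolynomial.bind₁ (fun j : Fin k =>
    MvPolynomial.C ((N : K)) * MvPolynomial.X j) g with hgN
  set ℓ : {x // x ∈ IP} → MvPolynomial (Fin k) K := fun i =>
    (∑ j, MvPolynomial.C ((((N:ℤ) * w i j : ℤ) : K)) * MvPolynomial.X j) -
      MvPolynomial.C (((∑ j, w i j * v i.1 j : ℤ) : K)) with hℓ
  set P : MvPolynomial (Fin k) K := gN * ∏ i ∈ IP.attach, ℓ i with hP
  -- evaluation of the linear factors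
  have evalℓ : ∀ (i : {x // x ∈ IP}) (y : Fin k → K),
      MvPolynomial.eval y (ℓ i) =
        (∑ j, (((N:ℤ) * w i j : ℤ) : K) * y j) - ((∑ j, w i j * v i.1 j : ℤ) : K) := by
    intro i y
    rw [hℓ]
    simp [MvPolynomial.eval_sum]
  -- P vanishes on the natural grid
  have hPvan : ∀ t : Fin k → ℕ, MvPolynomial.eval (fun j => ((t j : K))) P = 0 := by
    intro t
    set t' : Fin k → ℕ := fun j => N * t j with ht'
    have hcast : ((fun j => ((t' j : ℤ))) : Fin k → ℤ) = (N:ℤ) • (fun j => ((t j : ℤ))) := by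
      funext j
      simp only [Pi.smul_apply, smul_eq_mul, ht']
      push_cast
      ring
    rw [hP, map_mul]
    by_cases hgood : ∀ i ∈ I, ¬((fun j => ((t' j : ℤ))) - v i ∈ L i)
    · have h1 : MvPolynomial.eval (fun j => ((t j : K))) gN = 0 := by
        rw [hgN, eval_bind₁']
        have h2 : (fun i => MvPolynomial.eval (fun j => ((t j : K)))
            (MvPolynomial.C ((N : K)) * MvPolynomial.X i)) = fun j => ((t' j : ℕ) : K) := by
          funext j
          simp only [map_mul, MvPolynomial.eval_C, MvPolynomial.eval_X, ht']
          push_cast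
          ring
        rw [h2]
        exact hvan t' hgood
      rw [h1, zero_mul]
    · push_neg at hgood
      obtain ⟨i, hiI, hmem⟩ := hgood
      have hiP : i ∈ IP := by
        rw [hIP, Finset.mem_filter]
        refine ⟨hiI, ?_⟩
        intro hQLi
        have h3 : ((N:ℤ) • (fun j => ((t j : ℤ))) : Fin k → ℤ) ∈ L i := by
          apply hNmem i _ _
          rw [hIF, Finset.mem_filter]; exact ⟨hiI, hQLi⟩
        rw [hcast] at hmem
        have : -(v i) ∈ L i := by
          have := AddSubgroup.sub_mem _ hmem h3
          simpa using this
        exact h0 i hiI this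
      have hfac : MvPolynomial.eval (fun j => ((t j : K))) (ℓ ⟨i, hiP⟩) = 0 := by
        rw [evalℓ]
        have hp := hwperp ⟨i, hiP⟩ _ hmem
        have hsum : ∑ j, w ⟨i, hiP⟩ j * ((t' j : ℤ)) = ∑ j, w ⟨i, hiP⟩ j * v i j := by
          have hdist : ∑ j, w ⟨i, hiP⟩ j * (((t' j : ℤ)) - v i j) = 0 := by
            simpa [Pi.sub_apply] using hp
          rw [Finset.sum_congr rfl (fun j _ => mul_sub (w ⟨i, hiP⟩ j) _ _)] at hdist
          rw [Finset.sum_sub_distrib] at hdist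
          linarith [hdist]
        have hKsum : (∑ j, (((N:ℤ) * w ⟨i, hiP⟩ j : ℤ) : K) * ((t j : K))) =
            ((∑ j, w ⟨i, hiP⟩ j * ((t' j : ℤ)) : ℤ) : K) := by
          push_cast [ht']
          apply Finset.sum_congr rfl
          intro j _
          ring
        rw [hKsum, hsum, sub_self]
      have : ∏ i' ∈ IP.attach, MvPolynomial.eval (fun j => ((t j : K))) (ℓ i') = 0 :=
        Finset.prod_eq_zero (Finset.mem_attach IP ⟨i, hiP⟩) hfac
      rw [map_prod, this, mul_zero]
  have hP0 : P = 0 := eval_natGrid_eq_zero P hPvan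
  -- each linear factor is nonzero
  have hℓne : ∀ i : {x // x ∈ IP}, ℓ i ≠ 0 := by
    intro i hzero
    obtain ⟨j0, hj0⟩ : ∃ j0, w i j0 ≠ 0 := by
      by_contra hcon
      push_neg at hcon
      exact hwne i (funext hcon)
    have h1 := congrArg (MvPolynomial.eval (Pi.single j0 (1:K))) hzero
    have h2 := congrArg (MvPolynomial.eval (0 : Fin k → K)) hzero
    rw [evalℓ] at h1 h2
    rw [map_zero] at h1 h2
    simp only [Pi.zero_apply, mul_zero, Finset.sum_const_zero, zero_sub, neg_eq_zero] at h2
    have h3 : (∑ j, (((N:ℤ) * w i j : ℤ) : K) * (Pi.single j0 (1:K) : Fin k → K) j) =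
        (((N:ℤ) * w i j0 : ℤ) : K) := by
      rw [Finset.sum_eq_single j0]
      · simp
      · intro j _ hj; simp [Pi.single_apply, hj]
      · intro hj; exact absurd (Finset.mem_univ j0) hj
    rw [h3, h2, sub_zero] at h1
    have : (N:ℤ) * w i j0 = 0 := by exact_mod_cast h1
    rcases mul_eq_zero.1 this with hcase | hcase
    · have : (N:ℤ) ≠ 0 := by positivity
      exact this hcase
    · exact hj0 hcase
  have hprodne : (∏ i ∈ IP.attach, ℓ i) ≠ 0 :=
    Finset.prod_ne_zero_iff.2 fun i _ => hℓne i
  have hgN0 : gN = 0 := by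
    rcases mul_eq_zero.1 hP0 with hcase | hcase
    · exact hcase
    · exact absurd hcase hprodne
  -- undo the scaling
  apply MvPolynomial.funext (q := 0)
  intro x
  rw [map_zero]
  have hNK : ((N:K)) ≠ 0 := by
    simp only [ne_eq, Nat.cast_eq_zero]
    omega
  have : MvPolynomial.eval x g =
      MvPolynomial.eval (fun j => (N:K)⁻¹ * x j) gN := by
    rw [hgN, eval_bind₁']
    have hpt : (fun i => MvPolynomial.eval (fun j => (N:K)⁻¹ * x j)
        (MvPolynomial.C ((N : K)) * MvPolynomial.X i)) = x := by
      funext j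
      simp only [map_mul, MvPolynomial.eval_C, MvPolynomial.eval_X]
      field_simp
    rw [hpt]
  rw [this, hgN0, map_zero]

end LemZ
section WitImpLe

variable {d : ℕ} (K : Type) [Field K] [CharZero K]

set_option linter.unusedSectionVars false
set_option maxHeartbeats 1000000

open MvPolynomial

lemma NA_mono {B A : Finset (Zd d)} (h : B ⊆ A) : NA B ≤ NA A :=
  AddSubmonoid.closure_mono (by exact_mod_cast h)

lemma NA_le_ZB {B : Finset (Zd d)} {a : Zd d} (ha : a ∈ NA B) :
    a ∈ AddSubgroup.closure (B : Set (Zd d)) := by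
  induction ha using AddSubmonoid.closure_induction with
  | mem x hx => exact AddSubgroup.subset_closure hx
  | zero => exact AddSubgroup.zero_mem _
  | add x y _ _ hx hy => exact AddSubgroup.add_mem _ hx hy

lemma coset_sub_mem {b x z : Zd d} {B : Finset (Zd d)}
    (hx : x ∈ coset b B) (hz : z ∈ AddSubgroup.closure (B : Set (Zd d))) :
    x + z ∈ coset b B := by
  have : (x + z) - b = (x - b) + z := by abel
  unfold coset at hx ⊢
  rw [Set.mem_setOf_eq, this]
  exact AddSubgroup.add_mem _ hx hz

/-- If a polynomial vanishes on the part of `s + ℕB'` avoiding the removed cosets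
(with `s` itself avoiding all of them), then it vanishes on all of `toK s + K B'`. -/
lemma vanish_on_translate {m : ℕ} (f : MvPolynomial (Fin d) K) (B' : Finset (Zd d)) (s : Zd d)
    (b : Fin m → Zd d) (Bf : Fin m → Finset (Zd d))
    (hs : ∀ i, s ∉ coset (b i) (Bf i))
    (hvan : ∀ a ∈ NA B', (∀ i, s + a ∉ coset (b i) (Bf i)) →
      MvPolynomial.eval (toK K (s + a)) f = 0) :
    ∀ lam ∈ spanK K B', MvPolynomial.eval (toK K s + lam) f = 0 := by
  classical
  set k := Fintype.card ({x // x ∈ B'}) with hk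
  set eqv := (Fintype.equivFin ({x // x ∈ B'})).symm with heqv
  set e : Fin k → Zd d := fun j => ((eqv j : {x // x ∈ B'}) : Zd d) with he
  have heB : ∀ j, e j ∈ B' := fun j => (eqv j).2
  -- the ℤ-linear parametrization
  set σh : (Fin k → ℤ) →+ Zd d :=
    AddMonoidHom.mk' (fun t => ∑ j, t j • e j) (by
      intro t t'
      rw [← Finset.sum_add_distrib]
      apply Finset.sum_congr rfl
      intro j _
      rw [Pi.add_apply, add_smul]) with hσh
  -- the substituted polynomial
  set g : MvPolynomial (Fin k) K := MvPolynomial.bind₁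
    (fun i : Fin d => MvPolynomial.C (toK K s i) +
      ∑ j : Fin k, MvPolynomial.C (toK K (e j) i) * MvPolynomial.X j) f with hg
  have heval : ∀ t : Fin k → K,
      MvPolynomial.eval t g = MvPolynomial.eval (toK K s + ∑ j, t j • toK K (e j)) f := by
    intro t
    rw [hg, eval_bind₁']
    have hpt : (fun i => MvPolynomial.eval t (MvPolynomial.C (toK K s i) +
        ∑ j : Fin k, MvPolynomial.C (toK K (e j) i) * MvPolynomial.X j)) =
        toK K s + ∑ j, t j • toK K (e j) := by
      funext i
      rw [map_add, MvPolynomial.eval_C, map_sum]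
      rw [Pi.add_apply, Finset.sum_apply]
      congr 1
      apply Finset.sum_congr rfl
      intro j _
      rw [map_mul, MvPolynomial.eval_C, MvPolynomial.eval_X, Pi.smul_apply, smul_eq_mul, mul_comm]
    rw [hpt]
  have hσK : ∀ t : Fin k → ℕ, toK K (σh (fun j => (t j : ℤ))) = ∑ j, (t j : K) • toK K (e j) := by
    intro t
    funext i
    rw [hσh]
    show ((∑ j, ((t j : ℤ)) • e j) i : K) = _
    rw [Finset.sum_apply]
    push_cast
    rw [Finset.sum_apply]
    apply Finset.sum_congr rfl
    intro j _
    simp [toK]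
  have hσNA : ∀ t : Fin k → ℕ, σh (fun j => (t j : ℤ)) ∈ NA B' := by
    intro t
    rw [hσh]
    show (∑ j, ((t j : ℤ)) • e j) ∈ NA B'
    apply AddSubmonoid.sum_mem
    intro j _
    rw [natCast_zsmul]
    exact AddSubmonoid.nsmul_mem _ (AddSubmonoid.subset_closure (heB j)) _
  -- the coset obstructions pulled back
  set Li : Fin m → AddSubgroup (Fin k → ℤ) := fun i =>
    AddSubgroup.comap σh (AddSubgroup.closure ((Bf i : Set (Zd d)))) with hLi
  set J : Finset (Fin m) := Finset.univ.filter
    (fun i : Fin m => ∃ t0 : Fin k → ℤ, s + σh t0 ∈ coset (b i) (Bf i)) with hJ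
  set v : Fin m → (Fin k → ℤ) := fun i =>
    if h : ∃ t0 : Fin k → ℤ, s + σh t0 ∈ coset (b i) (Bf i) then h.choose else 0 with hv
  have hvspec : ∀ i ∈ J, s + σh (v i) ∈ coset (b i) (Bf i) := by
    intro i hi
    rw [hJ, Finset.mem_filter] at hi
    obtain ⟨-, hex⟩ := hi
    rw [hv]
    simp only [dif_pos hex]
    exact hex.choose_spec
  have hg0 : g = 0 := by
    apply lemZ J v Li ?h0 g ?hvan2
    case h0 =>
      intro i hi hneg
      -- σh (v i) ∈ ℤ Bf i, so s ∈ coset, contradiction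
      have h1 : σh (-(v i)) ∈ AddSubgroup.closure ((Bf i : Set (Zd d))) := hneg
      have h2 : σh (v i) ∈ AddSubgroup.closure ((Bf i : Set (Zd d))) := by
        have := AddSubgroup.neg_mem _ h1
        rwa [map_neg, neg_neg] at this
      have h3 := coset_sub_mem (hvspec i hi) (AddSubgroup.neg_mem _ h2)
      rw [add_assoc, add_neg_cancel, add_zero] at h3
      exact hs i h3
    case hvan2 =>
      intro t ht
      rw [heval, ← hσK]
      rw [← toK_add]
      apply hvan _ (hσNA t)
      intro i hin
      have hiJ : i ∈ J := by
        rw [hJ, Finset.mem_filter]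
        exact ⟨Finset.mem_univ i, ⟨_, hin⟩⟩
      apply ht i hiJ
      have hmem2 : σh ((fun j => ((t j : ℤ))) - v i) ∈
          AddSubgroup.closure ((Bf i : Set (Zd d))) := by
        rw [map_sub]
        have ha := hin
        have hb := hvspec i hiJ
        unfold coset at ha hb
        rw [Set.mem_setOf_eq] at ha hb
        have hd := AddSubgroup.sub_mem _ ha hb
        have heq : s + σh (fun j => ((t j : ℤ))) - b i - (s + σh (v i) - b i) =
            σh (fun j => ((t j : ℤ))) - σh (v i) := by abel
        rwa [heq] at hd
      exact AddSubgroup.mem_comap.2 hmem2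
  -- conclude
  intro lam hlam
  have hrep : ∃ t : Fin k → K, lam = ∑ j, t j • toK K (e j) := by
    have : lam ∈ Submodule.span K ((B'.image (toK K) : Finset (Fin d → K)) : Set (Fin d → K)) := by
      rw [Finset.coe_image]
      exact hlam
    rw [Submodule.mem_span_finset] at this
    obtain ⟨φ, -, hφ⟩ := this
    refine ⟨fun j => φ (toK K (e j)), ?_⟩
    rw [← hφ]
    rw [Finset.sum_image (fun x _ y _ hxy => toK_injective K hxy)]
    rw [← Finset.sum_coe_sort B' (fun a => φ (toK K a) • toK K a)]
    exact (Fintype.sum_equiv eqv (fun j => φ (toK K (e j)) • toK K (e j))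
      (fun a => φ (toK K (a : Zd d)) • toK K (a : Zd d)) (fun j => rfl)).symm
  obtain ⟨t, rfl⟩ := hrep
  rw [← heval, hg0, map_zero]

/-- A witness yields the containment of vanishing ideals. -/
lemma wit_imp_le {m : ℕ} (A : Finset (Zd d)) (Sc S : Set (Zd d)) (b : Fin m → Zd d)
    (Bf : Fin m → Finset (Zd d)) (hset : Setting A Sc S b Bf)
    (Bτ B' : Finset (Zd d)) (hsub : Bτ ⊆ B') (hB' : IsFace A B') (α : Fin d → K) (c : Zd d)
    (hw : Wit K S B' α c) :
    vIdeal K (toK K '' Omega S S c) ≤ vIdeal K (aff K α Bτ) := by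
  obtain ⟨G', hB'A, -, -⟩ := hB'
  obtain ⟨s, hsS, hαs, hdisj⟩ := hw
  intro f hf
  rw [mem_vIdeal] at hf
  rw [mem_vIdeal]
  rintro y ⟨lam, hlam, rfl⟩
  have hSsubSc : S ⊆ Sc := by rw [hset.expr]; exact Set.diff_subset
  have hsnc : ∀ i, s ∉ coset (b i) (Bf i) := by
    intro i hin
    rw [hset.expr] at hsS
    exact hsS.2 (Set.mem_iUnion.2 ⟨i, hin⟩)
  have hμ : (α - toK K s) + lam ∈ spanK K B' := add_mem hαs (spanK_mono K hsub hlam)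
  have hkey := vanish_on_translate K f B' s b Bf hsnc ?hvan ((α - toK K s) + lam) hμ
  · have heq : toK K s + ((α - toK K s) + lam) = α + lam := by abel
    rwa [heq] at hkey
  case hvan =>
    intro a ha hnc
    apply hf
    refine ⟨s + a, ⟨?_, ?_⟩, rfl⟩
    · rw [hset.expr]
      constructor
      · exact hset.fg.1 s (hSsubSc hsS) a (NA_mono hB'A ha)
      · intro hmem
        obtain ⟨U, ⟨i, rfl⟩, hi⟩ := hmem
        exact hnc i hi
    · intro hmem
      have haZ : a ∈ AddSubgroup.closure (B' : Set (Zd d)) := NA_le_ZB ha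
      apply hdisj a haZ
      have : s + c + a = c + (s + a) := by abel
      rwa [this]
end WitImpLe
section Flin

variable {d : ℕ} (K : Type) [Field K] [CharZero K]

set_option linter.unusedSectionVars false
set_option maxHeartbeats 1000000

/-- Decomposition of an integer vector into coordinates. -/
lemma F_expand (F : Zd d →+ ℤ) (x : Zd d) : F x = ∑ i, x i * F (Pi.single i 1) := by
  have hx : x = ∑ i, x i • Pi.single i (1 : ℤ) := by
    have h1 : ∀ i, x i • (Pi.single i (1 : ℤ) : Zd d) = (Pi.single i (x i) : Zd d) := by
      intro i
      funext j
      by_cases hij : j = i <;> simp [Pi.single_apply, hij]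
    rw [Finset.sum_congr rfl fun i _ => h1 i, Finset.univ_sum_single]
  conv_lhs => rw [hx]
  rw [map_sum]
  apply Finset.sum_congr rfl
  intro i _
  rw [map_zsmul, smul_eq_mul]

/-- The `K`-linear extension of an integral functional. -/
def Flin (F : Zd d →+ ℤ) : (Fin d → K) →ₗ[K] K where
  toFun := fun y => ∑ i, ((F (Pi.single i 1) : ℤ) : K) * y i
  map_add' := by
    intro y z
    rw [← Finset.sum_add_distrib]
    apply Finset.sum_congr rfl
    intro i _
    rw [Pi.add_apply, mul_add]
  map_smul' := by
    intro a y
    rw [smul_eq_mul, Finset.mul_sum]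
    apply Finset.sum_congr rfl
    intro i _
    rw [Pi.smul_apply, smul_eq_mul]
    simp only [RingHom.id_apply]
    ring

lemma Flin_toK (F : Zd d →+ ℤ) (x : Zd d) : Flin K F (toK K x) = ((F x : ℤ) : K) := by
  show (∑ i, ((F (Pi.single i 1) : ℤ) : K) * toK K x i) = ((F x : ℤ) : K)
  rw [F_expand F x]
  push_cast
  apply Finset.sum_congr rfl
  intro i _
  simp [toK]
  ring

lemma Flin_vanish_spanK {C : Finset (Zd d)} {F : Zd d →+ ℤ} (hC : ∀ a ∈ C, F a = 0) :
    ∀ y ∈ spanK K C, Flin K F y = 0 := by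
  intro y hy
  have : Submodule.span K (toK K '' (C : Set (Zd d))) ≤ LinearMap.ker (Flin K F) := by
    rw [Submodule.span_le]
    rintro z ⟨a, ha, rfl⟩
    rw [SetLike.mem_coe, LinearMap.mem_ker, Flin_toK]
    rw [hC a (by exact_mod_cast ha)]
    simp
  exact this hy

/-- An element of `A` whose `K`-realization lies in the span of a face belongs to the face. -/
lemma face_mem_of_spanK {A C : Finset (Zd d)} (hC : IsFace A C) {a : Zd d} (ha : a ∈ A)
    (hsp : toK K a ∈ spanK K C) : a ∈ C := by
  obtain ⟨G, hCA, hpos, hiff⟩ := hC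
  have hvan : ∀ c ∈ C, G c = 0 := fun c hc => (hiff c (hCA hc)).2 hc
  have h0 : Flin K G (toK K a) = 0 := Flin_vanish_spanK K hvan _ hsp
  rw [Flin_toK] at h0
  have : (G a : ℤ) = 0 := by exact_mod_cast h0
  exact (hiff a ha).1 this

end Flin
section RankTransfer

variable {d : ℕ}

set_option linter.unusedSectionVars false
set_option maxHeartbeats 1000000

/-- Coordinatewise embedding of `ℚ^d` into `L^d`. -/
def castL (L : Type) [Field L] [CharZero L] (q : Fin d → ℚ) : Fin d → L :=
  fun i => algebraMap ℚ L (q i)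

variable (L : Type) [Field L] [CharZero L]

lemma castL_add (q r : Fin d → ℚ) : castL L (q + r) = castL L q + castL L r := by
  funext i; simp [castL]

lemma castL_smul (a : ℚ) (q : Fin d → ℚ) : castL L (a • q) = algebraMap ℚ L a • castL L q := by
  funext i; simp [castL]

lemma castL_zero : castL L (0 : Fin d → ℚ) = 0 := by funext i; simp [castL]

lemma castL_mem_span {T : Set (Fin d → ℚ)} {y : Fin d → ℚ} (hy : y ∈ Submodule.span ℚ T) :
    castL L y ∈ Submodule.span L (castL L '' T) := by
  induction hy using Submodule.span_induction with
  | mem x hx => exact Submodule.subset_span ⟨x, hx, rfl⟩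
  | zero => rw [castL_zero]; exact Submodule.zero_mem _
  | add x y _ _ hx hy => rw [castL_add]; exact Submodule.add_mem _ hx hy
  | smul a x _ hx => rw [castL_smul]; exact Submodule.smul_mem _ _ hx

/-- Transfer of linear independence from `ℚ` to any char-zero field. -/
lemma li_transfer {ι : Type*} [Fintype ι] (v : ι → (Fin d → ℚ))
    (hv : LinearIndependent ℚ v) : LinearIndependent L (fun i => castL L (v i)) := by
  classical
  -- dual family over ℚ
  set U := Submodule.span ℚ (Set.range v) with hU
  set bb : Module.Basis ι ℚ U := Module.Basis.span hv with hbb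
  obtain ⟨q, hq⟩ := Submodule.exists_isCompl U
  set π : (Fin d → ℚ) →ₗ[ℚ] U := Submodule.projectionOnto U q hq with hπ
  set fdual : ι → ((Fin d → ℚ) →ₗ[ℚ] ℚ) := fun j => (bb.coord j).comp π with hfdual
  have hdelta : ∀ i j : ι, fdual j (v i) = if i = j then 1 else 0 := by
    intro i j
    have hvU : v i ∈ U := Submodule.subset_span (Set.mem_range_self i)
    have hproj : π (v i) = ⟨v i, hvU⟩ :=
      Submodule.projectionOnto_apply_left hq ⟨v i, hvU⟩
    have hbi : (⟨v i, hvU⟩ : U) = bb i := by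
      apply Subtype.ext
      rw [Module.Basis.span_apply]
    rw [hfdual]
    simp only [LinearMap.comp_apply, hproj, hbi, Module.Basis.coord_apply, Module.Basis.repr_self,
      Finsupp.single_apply, eq_comm]
  -- independence over L
  rw [Fintype.linearIndependent_iff]
  intro c hc j
  -- the L-linear dot functional attached to fdual j
  set wj : Fin d → ℚ := fun r => fdual j (Pi.single r 1) with hwj
  set Dl : (Fin d → L) →ₗ[L] L :=
    { toFun := fun y => ∑ r, algebraMap ℚ L (wj r) * y r,
      map_add' := by
        intro y z
        rw [← Finset.sum_add_distrib]
        exact Finset.sum_congr rfl fun r _ => by rw [Pi.add_apply, mul_add]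
      map_smul' := by
        intro a y
        rw [RingHom.id_apply, smul_eq_mul, Finset.mul_sum]
        exact Finset.sum_congr rfl fun r _ => by
          rw [Pi.smul_apply, smul_eq_mul]; ring } with hDl
  have hDlcast : ∀ y : Fin d → ℚ, Dl (castL L y) = algebraMap ℚ L (fdual j y) := by
    intro y
    show (∑ r, algebraMap ℚ L (wj r) * castL L y r) = algebraMap ℚ L (fdual j y)
    have hexp : fdual j y = ∑ r, wj r * y r := by
      rw [LinearMap.pi_apply_eq_sum_univ (fdual j) y]
      apply Finset.sum_congr rfl
      intro r _
      rw [smul_eq_mul, hwj]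
      have : (fun j_1 => if r = j_1 then (1:ℚ) else 0) = Pi.single r 1 := by
        funext j1
        rw [Pi.single_apply]
        by_cases h : r = j1 <;> simp [h, eq_comm]
      rw [this]
      ring
    rw [hexp, map_sum]
    apply Finset.sum_congr rfl
    intro r _
    rw [map_mul, castL]
  have happly := congrArg Dl hc
  rw [map_sum, map_zero] at happly
  have hsum : ∑ i, c i * (if i = j then (1:L) else 0) = 0 := by
    have hstep : ∑ i, c i * (if i = j then (1:L) else 0) =
        ∑ x, Dl (c x • castL L (v x)) := by
      apply Finset.sum_congr rfl
      intro i _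
      rw [map_smul, hDlcast (v i), hdelta i j, smul_eq_mul]
      by_cases h : i = j
      · simp [h]
      · simp [h]
    rw [hstep, happly]
  have hsum2 : ∑ i, (if i = j then c i else 0) = 0 := by
    have hstep2 : ∑ i, (if i = j then c i else 0) =
        ∑ i, c i * (if i = j then (1:L) else 0) := by
      apply Finset.sum_congr rfl
      intro i _
      by_cases h : i = j <;> simp [h]
    rw [hstep2, hsum]
  rw [Finset.sum_ite_eq' Finset.univ j c] at hsum2
  simpa using hsum2

/-- Rank transfer: the dimension of the span of a finite set of rational vectors is the
same over any characteristic-zero field. -/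
lemma finrank_span_cast (M : Set (Fin d → ℚ)) (hfin : M.Finite) :
    Module.finrank L (Submodule.span L (castL L '' M)) =
      Module.finrank ℚ (Submodule.span ℚ M) := by
  classical
  obtain ⟨sb, hsub, hspan, hind⟩ := exists_linearIndependent ℚ M
  have hsbfin : sb.Finite := hfin.subset hsub
  haveI : Fintype sb := hsbfin.fintype
  -- ℚ side
  have hQ : Module.finrank ℚ (Submodule.span ℚ M) = Fintype.card sb := by
    have h1 := finrank_span_eq_card hind
    rw [Subtype.range_coe] at h1
    rw [← hspan]
    exact h1
  -- L side
  have hLspan : Submodule.span L (castL L '' M) = Submodule.span L (castL L '' sb) := by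
    apply le_antisymm
    · rw [Submodule.span_le]
      rintro y ⟨x, hx, rfl⟩
      apply castL_mem_span
      rw [hspan]
      exact Submodule.subset_span hx
    · exact Submodule.span_mono (Set.image_mono hsub)
  have hLi : LinearIndependent L (fun x : sb => castL L (x : Fin d → ℚ)) :=
    li_transfer L _ hind
  have himg : castL L '' sb = Set.range (fun x : sb => castL L (x : Fin d → ℚ)) := by
    rw [show (fun x : sb => castL L (x : Fin d → ℚ)) =
      (castL L) ∘ ((↑) : sb → (Fin d → ℚ)) from rfl]
    rw [Set.range_comp, Subtype.range_coe]
  have hL1 := finrank_span_eq_card hLi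
  rw [← himg] at hL1
  rw [hLspan, hL1, hQ]

end RankTransfer
section Facets

variable {d : ℕ} (K : Type) [Field K] [CharZero K]

set_option linter.unusedSectionVars false
set_option maxHeartbeats 1000000

lemma castL_toQ (a : Zd d) : castL K (toK ℚ a) = toK K a := by
  funext i
  show algebraMap ℚ K ((a i : ℤ) : ℚ) = ((a i : ℤ) : K)
  exact map_intCast (algebraMap ℚ K) (a i)

/-- If `ℤA = ℤ^d`, then the rational span of `A` is everything. -/
lemma span_toQ_top {A : Finset (Zd d)} (hlatt : ZA A = ⊤) :
    Submodule.span ℚ (toK ℚ '' (A : Set (Zd d))) = ⊤ := by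
  rw [eq_top_iff]
  intro y _
  have hsingle : ∀ i, (Pi.single i (1:ℚ) : Fin d → ℚ) ∈
      Submodule.span ℚ (toK ℚ '' (A : Set (Zd d))) := by
    intro i
    have hei : (Pi.single i (1:ℤ) : Zd d) ∈ AddSubgroup.closure (A : Set (Zd d)) := by
      have : (Pi.single i (1:ℤ) : Zd d) ∈ ZA A := by rw [hlatt]; trivial
      exact this
    have hmem := toK_mem_spanK ℚ hei
    have heq : toK ℚ (Pi.single i (1:ℤ) : Zd d) = (Pi.single i (1:ℚ) : Fin d → ℚ) := by
      funext j
      by_cases hij : j = i <;> simp [toK, Pi.single_apply, hij]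
    rwa [heq] at hmem
  have hy : y = ∑ i, y i • (Pi.single i (1:ℚ) : Fin d → ℚ) := by
    have h1 : ∀ i, y i • (Pi.single i (1 : ℚ) : Fin d → ℚ) = (Pi.single i (y i) : Fin d → ℚ) := by
      intro i
      funext j
      by_cases hij : j = i <;> simp [Pi.single_apply, hij]
    rw [Finset.sum_congr rfl fun i _ => h1 i, Finset.univ_sum_single]
  rw [hy]
  exact Submodule.sum_mem _ fun i _ => Submodule.smul_mem _ _ (hsingle i)

lemma coe_facetSet {A : Finset (Zd d)} (F : Zd d →+ ℤ) :
    ((facetSet A F : Finset (Zd d)) : Set (Zd d)) = {a : Zd d | a ∈ A ∧ F a = 0} := by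
  ext a
  simp [facetSet]

/-- The rank of the span of a facet is `d - 1` over any char-zero field. -/
lemma facet_span_rank {A : Finset (Zd d)} {F : Zd d →+ ℤ} (hF : IsFacetFn A F) :
    Module.finrank K (Submodule.span K (toK K '' {a : Zd d | a ∈ A ∧ F a = 0})) = d - 1 := by
  obtain ⟨-, -, hrank⟩ := hF
  set Z : Set (Zd d) := {a : Zd d | a ∈ A ∧ F a = 0} with hZ
  have hZfin : Z.Finite := A.finite_toSet.subset (fun a ha => ha.1)
  set MQ : Set (Fin d → ℚ) := toK ℚ '' Z with hMQ
  have hMQfin : MQ.Finite := hZfin.image _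
  have himgR : toR '' Z = castL ℝ '' MQ := by
    rw [hMQ, Set.image_image]
    apply Set.image_congr
    intro a _
    rw [castL_toQ]
    funext i
    show (a i : ℝ) = ((a i : ℤ) : ℝ)
    norm_cast
  have himgK : toK K '' Z = castL K '' MQ := by
    rw [hMQ, Set.image_image]
    apply Set.image_congr
    intro a _
    rw [castL_toQ]
  rw [himgK, finrank_span_cast K MQ hMQfin, ← finrank_span_cast ℝ MQ hMQfin, ← himgR]
  exact hrank

lemma facet_d_pos {A : Finset (Zd d)} {F : Zd d →+ ℤ} (hF : IsFacetFn A F) : 0 < d := by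
  obtain ⟨-, hsurj, -⟩ := hF
  by_contra hd
  push_neg at hd
  interval_cases d
  obtain ⟨x₀, hx₀⟩ := hsurj 1
  have hx0 : x₀ = 0 := funext fun i => i.elim0
  rw [hx0, map_zero] at hx₀
  exact zero_ne_one hx₀

/-- The span of the lattice points on a facet is exactly the kernel of the extended
support functional. -/
lemma facet_ker {A : Finset (Zd d)} (hlatt : ZA A = ⊤) {F : Zd d →+ ℤ} (hF : IsFacetFn A F) :
    spanK K (facetSet A F) = LinearMap.ker (Flin K F) := by
  have hdpos := facet_d_pos hF
  obtain ⟨hpos, hsurj, hrank⟩ := hF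
  obtain ⟨x₀, hx₀⟩ := hsurj 1
  have hFlin1 : Flin K F (toK K x₀) = 1 := by rw [Flin_toK, hx₀]; norm_cast
  have hle : spanK K (facetSet A F) ≤ LinearMap.ker (Flin K F) := by
    intro y hy
    rw [LinearMap.mem_ker]
    apply Flin_vanish_spanK K _ _ hy
    intro a ha
    exact (Finset.mem_filter.1 ha).2
  have hrange : LinearMap.range (Flin K F) = ⊤ := by
    rw [eq_top_iff]
    rintro y -
    exact ⟨y • toK K x₀, by rw [map_smul, hFlin1, smul_eq_mul, mul_one]⟩
  have hker : Module.finrank K (LinearMap.ker (Flin K F)) = d - 1 := by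
    have hrn := LinearMap.finrank_range_add_finrank_ker (Flin K F)
    rw [hrange, finrank_top, Module.finrank_self] at hrn
    have hdim : Module.finrank K (Fin d → K) = d := by
      rw [Module.finrank_pi]
      exact Fintype.card_fin d
    rw [hdim] at hrn
    omega
  have hspanrank : Module.finrank K (spanK K (facetSet A F)) = d - 1 := by
    have h1 := facet_span_rank K (A := A) (F := F) ⟨hpos, hsurj, hrank⟩
    have h2 : spanK K (facetSet A F) =
        Submodule.span K (toK K '' {a : Zd d | a ∈ A ∧ F a = 0}) := by
      rw [spanK, coe_facetSet]
    rw [h2]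
    exact h1
  exact Submodule.eq_of_le_of_finrank_eq hle (by rw [hspanrank, hker])

/-- A facet support function is determined by its zero set on `A`. -/
lemma facet_unique {A : Finset (Zd d)} (hlatt : ZA A = ⊤) {F F' : Zd d →+ ℤ}
    (hF : IsFacetFn A F) (hF' : IsFacetFn A F') (hZ : facetSet A F = facetSet A F') :
    F = F' := by
  obtain ⟨x₀, hx₀⟩ := hF.2.1 1
  -- equality of kernels over ℚ
  have hkers : LinearMap.ker (Flin ℚ F) = LinearMap.ker (Flin ℚ F') := by
    rw [← facet_ker ℚ hlatt hF, ← facet_ker ℚ hlatt hF', hZ]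
  set q : ℚ := Flin ℚ F' (toK ℚ x₀) with hq
  have hF1 : Flin ℚ F (toK ℚ x₀) = 1 := by rw [Flin_toK, hx₀]; norm_cast
  have hprop : ∀ y : Fin d → ℚ, Flin ℚ F' y = q * Flin ℚ F y := by
    intro y
    have hker1 : y - (Flin ℚ F y) • toK ℚ x₀ ∈ LinearMap.ker (Flin ℚ F) := by
      rw [LinearMap.mem_ker, map_sub, map_smul, hF1, smul_eq_mul, mul_one, sub_self]
    rw [hkers, LinearMap.mem_ker, map_sub, map_smul, ← hq, smul_eq_mul] at hker1
    have := sub_eq_zero.1 hker1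
    rw [this]
    ring
  have hcast : ∀ x : Zd d, (F' x : ℚ) = q * (F x : ℚ) := by
    intro x
    have := hprop (toK ℚ x)
    rwa [Flin_toK, Flin_toK] at this
  have hqval : q = (F' x₀ : ℚ) := by
    have h := hcast x₀
    rw [hx₀] at h
    rw [h]
    push_cast
    ring
  -- find a ∈ A with F a ≠ 0
  obtain ⟨a, haA, haF⟩ : ∃ a ∈ A, F a ≠ 0 := by
    by_contra hcon
    push_neg at hcon
    have hsub : Submodule.span ℚ (toK ℚ '' (A : Set (Zd d))) ≤ LinearMap.ker (Flin ℚ F) := by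
      rw [Submodule.span_le]
      rintro y ⟨b, hb, rfl⟩
      rw [SetLike.mem_coe, LinearMap.mem_ker, Flin_toK, hcon b (by exact_mod_cast hb)]
      norm_cast
    rw [span_toQ_top hlatt] at hsub
    have : Flin ℚ F (toK ℚ x₀) = 0 := hsub (Submodule.mem_top) -- membership in ker
    rw [hF1] at this
    exact one_ne_zero this
  have haF' : F' a ≠ 0 := by
    intro h0
    have : a ∈ facetSet A F' := Finset.mem_filter.2 ⟨haA, h0⟩
    rw [← hZ] at this
    exact haF (Finset.mem_filter.1 this).2
  have haFpos : 0 < F a := lt_of_le_of_ne (hF.1 a haA) (Ne.symm haF)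
  have haF'pos : 0 < F' a := lt_of_le_of_ne (hF'.1 a haA) (Ne.symm haF')
  -- q is a unit integer
  obtain ⟨y₀, hy₀⟩ := hF'.2.1 1
  have hunit : F' x₀ * F y₀ = 1 := by
    have h1 := hcast y₀
    rw [hy₀, hqval] at h1
    exact_mod_cast h1.symm
  have hcases := Int.isUnit_iff.1 (IsUnit.of_mul_eq_one _ hunit)
  have hq1 : q = 1 := by
    rcases hcases with h1 | hm1
    · rw [hqval, h1]; norm_cast
    · exfalso
      have := hcast a
      rw [hqval, hm1] at this
      have : (F' a : ℚ) = -(F a : ℚ) := by rw [this]; push_cast; ring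
      have hlt : F' a = -(F a) := by exact_mod_cast this
      omega
  apply DFunLike.ext
  intro x
  have := hcast x
  rw [hq1, one_mul] at this
  exact_mod_cast this.symm

end Facets
section Numerical

set_option linter.unusedSectionVars false
set_option maxHeartbeats 1000000

/-- A nonnegative submonoid of `ℤ` generating `ℤ` as a group is cofinite. -/
lemma num_cofinite (M : AddSubmonoid ℤ) (hnn : ∀ x ∈ M, 0 ≤ x)
    (hgen : AddSubgroup.closure (M : Set ℤ) = ⊤) :
    ∃ μ : ℤ, ∀ n : ℤ, μ ≤ n → n ∈ M := by
  obtain ⟨x, hx, y, hy, hxy⟩ : ∃ x ∈ M, ∃ y ∈ M, (1:ℤ) = x - y := by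
    have h1 : (1:ℤ) ∈ AddSubgroup.closure (M : Set ℤ) := by rw [hgen]; trivial
    set H : AddSubgroup ℤ :=
      { carrier := {z | ∃ a ∈ M, ∃ b ∈ M, z = a - b},
        zero_mem' := ⟨0, M.zero_mem, 0, M.zero_mem, by ring⟩,
        add_mem' := by
          rintro z w ⟨a,ha,bb,hb,rfl⟩ ⟨a',ha',b',hb',rfl⟩
          exact ⟨a+a', M.add_mem ha ha', bb+b', M.add_mem hb hb', by ring⟩,
        neg_mem' := by
          rintro z ⟨a,ha,bb,hb,rfl⟩
          exact ⟨bb,hb,a,ha, by ring⟩ } with hH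
    have hMH : (M : Set ℤ) ⊆ H := fun a ha => ⟨a, ha, 0, M.zero_mem, by ring⟩
    have h2 := (AddSubgroup.closure_le H).2 hMH h1
    exact h2
  have hy0 : 0 ≤ y := hnn y hy
  refine ⟨y * y, ?_⟩
  intro n hn
  by_cases hy00 : y = 0
  · have hx1 : x = 1 := by omega
    have hn0 : 0 ≤ n := by nlinarith
    have : n = n.toNat • x := by
      rw [hx1, nsmul_eq_mul, mul_one, Int.toNat_of_nonneg hn0]
    rw [this]
    exact AddSubmonoid.nsmul_mem _ hx _
  · have hypos : 0 < y := lt_of_le_of_ne hy0 (Ne.symm hy00)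
    set q := n / y with hqdef
    set r := n % y with hrdef
    have hr0 : 0 ≤ r := Int.emod_nonneg n hy00
    have hrly : r < y := Int.emod_lt_of_pos n hypos
    have hqr : n = y * q + r := (Int.mul_ediv_add_emod n y).symm
    have hq : y ≤ q := by
      by_contra hlt
      push_neg at hlt
      have hqle : q ≤ y - 1 := by omega
      nlinarith
    have hxval : x = y + 1 := by omega
    have hdecomp : n = (q - r) * y + r * x := by
      rw [hxval]
      linear_combination hqr
    rw [hdecomp]
    apply M.add_mem
    · have hqr0 : 0 ≤ q - r := by omega
      have h3 : (q - r) * y = (q - r).toNat • y := by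
        rw [nsmul_eq_mul, Int.toNat_of_nonneg hqr0]
      rw [h3]
      exact AddSubmonoid.nsmul_mem _ hy _
    · have h4 : r * x = r.toNat • x := by
        rw [nsmul_eq_mul, Int.toNat_of_nonneg hr0]
      rw [h4]
      exact AddSubmonoid.nsmul_mem _ hx _

end Numerical

section FaceHelpers

variable {d : ℕ}

set_option linter.unusedSectionVars false
set_option maxHeartbeats 1000000

lemma F_nonneg_NA {A : Finset (Zd d)} {F : Zd d →+ ℤ} (hpos : ∀ a ∈ A, 0 ≤ F a) :
    ∀ a ∈ NA A, 0 ≤ F a := by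
  intro a ha
  induction ha using AddSubmonoid.closure_induction with
  | mem x hx => exact hpos x (by exact_mod_cast hx)
  | zero => simp
  | add x y _ _ hx hy => rw [map_add]; positivity

lemma F_vanish_ZB {C : Finset (Zd d)} {F : Zd d →+ ℤ} (h : ∀ a ∈ C, F a = 0) :
    ∀ z ∈ AddSubgroup.closure (C : Set (Zd d)), F z = 0 := by
  intro z hz
  induction hz using AddSubgroup.closure_induction with
  | mem x hx => exact h x (by exact_mod_cast hx)
  | zero => simp
  | add x y _ _ hx hy => rw [map_add, hx, hy, add_zero]
  | neg x _ hx => rw [map_neg, hx, neg_zero]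

lemma isFace_facetSet {A : Finset (Zd d)} {F : Zd d →+ ℤ} (hF : IsFacetFn A F) :
    IsFace A (facetSet A F) := by
  refine ⟨F, Finset.filter_subset _ _, hF.1, ?_⟩
  intro a ha
  constructor
  · intro h0
    exact Finset.mem_filter.2 ⟨ha, h0⟩
  · intro hmem
    exact (Finset.mem_filter.1 hmem).2

/-- Cofiniteness of the image of `ℕA` under a facet support function. -/
lemma facet_image_cofinite {A : Finset (Zd d)} (hlatt : ZA A = ⊤) {F : Zd d →+ ℤ}
    (hF : IsFacetFn A F) :
    ∃ μ : ℤ, ∀ n : ℤ, μ ≤ n → n ∈ AddSubmonoid.map F (NA A) := by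
  apply num_cofinite
  · rintro x ⟨a, ha, rfl⟩
    exact F_nonneg_NA hF.1 a ha
  · rw [eq_top_iff]
    rintro y -
    obtain ⟨x, rfl⟩ := hF.2.1 y
    have hx : x ∈ AddSubgroup.closure (A : Set (Zd d)) := by
      have : x ∈ ZA A := by rw [hlatt]; trivial
      exact this
    have hFx : F x ∈ AddSubgroup.closure (F '' (A : Set (Zd d))) := by
      rw [← AddMonoidHom.map_closure]
      exact ⟨x, hx, rfl⟩
    have hsub : AddSubgroup.closure (F '' (A : Set (Zd d))) ≤
        AddSubgroup.closure ((AddSubmonoid.map F (NA A) : Set ℤ)) := by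
      apply AddSubgroup.closure_mono
      rintro z ⟨a, ha, rfl⟩
      exact ⟨a, AddSubmonoid.subset_closure ha, rfl⟩
    exact hsub hFx

end FaceHelpers
section Covering

variable {d : ℕ}

set_option linter.unusedSectionVars false
set_option maxHeartbeats 1600000

/-- The covering lemma: `Ω_S(c)` is covered by finitely many witness pieces. -/
lemma covering {m : ℕ} (K : Type) [Field K] [CharZero K]
    (A : Finset (Zd d)) (Sc S : Set (Zd d)) (b : Fin m → Zd d)
    (Bf : Fin m → Finset (Zd d)) (hset : Setting A Sc S b Bf) (c : Zd d) :
    ∃ PP : Finset ((Zd d) × Finset (Zd d)),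
      (∀ p ∈ PP, p.1 ∈ S ∧ IsFace A p.2 ∧
        (∀ z ∈ AddSubgroup.closure ((p.2 : Set (Zd d))), p.1 + c + z ∉ S)) ∧
      (∀ x ∈ Omega S S c, ∃ p ∈ PP, toK K x - toK K p.1 ∈ spanK K p.2) := by
  classical
  have hSsub : S ⊆ Sc := by rw [hset.expr]; exact Set.diff_subset
  obtain ⟨G, hG⟩ := hset.fg.2
  by_cases hGne : G.Nonempty
  case neg =>
    refine ⟨∅, by simp, ?_⟩
    intro x hx
    exfalso
    have hxSc := hSsub hx.1
    rw [hG] at hxSc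
    obtain ⟨g, hg, -⟩ := hxSc
    exact hGne ⟨g, hg⟩
  case pos =>
  obtain ⟨g₀, hg₀G⟩ := hGne
  -- Case 1 data
  set pred1 : Fin m → Prop := fun i => ∃ x, x ∈ Omega S S c ∧ (x + c) ∈ coset (b i) (Bf i)
    with hpred1
  set w1 : Fin m → Zd d := fun i => if h : pred1 i then h.choose else 0 with hw1
  have hw1spec : ∀ i, pred1 i → (w1 i ∈ Omega S S c ∧ (w1 i + c) ∈ coset (b i) (Bf i)) := by
    intro i hi
    rw [hw1]
    simp only [dif_pos hi]
    exact hi.choose_spec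
  set P1 : Finset ((Zd d) × Finset (Zd d)) :=
    (Finset.univ.filter pred1).image (fun i => (w1 i, Bf i)) with hP1
  -- Case 2 data
  set hasF : Finset (Zd d) → Prop :=
    fun B₀ => ∃ F : Zd d →+ ℤ, IsFacetFn A F ∧ facetSet A F = B₀ with hhasF
  set FF : Finset (Zd d) → (Zd d →+ ℤ) := fun B₀ => if h : hasF B₀ then h.choose else 0 with hFF
  have hFFspec : ∀ B₀, hasF B₀ → (IsFacetFn A (FF B₀) ∧ facetSet A (FF B₀) = B₀) := by
    intro B₀ h
    rw [hFF]
    simp only [dif_pos h]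
    exact h.choose_spec
  set μf : Finset (Zd d) → ℤ := fun B₀ =>
    if h : ∃ μ : ℤ, ∀ n : ℤ, μ ≤ n → n ∈ AddSubmonoid.map (FF B₀) (NA A) then h.choose else 0
    with hμf
  have hμfspec : ∀ B₀, hasF B₀ → ∀ n : ℤ, μf B₀ ≤ n → n ∈ AddSubmonoid.map (FF B₀) (NA A) := by
    intro B₀ h
    have hex := facet_image_cofinite hset.latt (hFFspec B₀ h).1
    intro n hn
    rw [hμf] at hn
    simp only [dif_pos hex] at hn
    exact hex.choose_spec n hn
  set pred2 : Finset (Zd d) → ℤ → Prop := fun B₀ nn =>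
    ∃ x, x ∈ Omega S S c ∧ FF B₀ (x + c) = nn ∧ nn ∉ (FF B₀) '' Sc with hpred2
  set w2 : Finset (Zd d) → ℤ → Zd d := fun B₀ nn => if h : pred2 B₀ nn then h.choose else 0
    with hw2
  have hw2spec : ∀ B₀ nn, pred2 B₀ nn →
      (w2 B₀ nn ∈ Omega S S c ∧ FF B₀ (w2 B₀ nn + c) = nn ∧ nn ∉ (FF B₀) '' Sc) := by
    intro B₀ nn h
    rw [hw2]
    simp only [dif_pos h]
    exact h.choose_spec
  set rangeB : Finset (Zd d) → Finset ℤ := fun B₀ =>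
    Finset.Icc ((G.image (fun g => FF B₀ g)).min' (Finset.Nonempty.image ⟨g₀, hg₀G⟩ _) + FF B₀ c)
      (FF B₀ g₀ + μf B₀) with hrangeB
  set P2 : Finset ((Zd d) × Finset (Zd d)) :=
    A.powerset.biUnion (fun B₀ =>
      ((rangeB B₀).filter (fun nn => hasF B₀ ∧ pred2 B₀ nn)).image (fun nn => (w2 B₀ nn, B₀)))
    with hP2
  refine ⟨P1 ∪ P2, ?_, ?_⟩
  · intro p hp
    rcases Finset.mem_union.1 hp with hp1 | hp2
    · obtain ⟨i, hi, rfl⟩ := Finset.mem_image.1 hp1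
      have hpi : pred1 i := (Finset.mem_filter.1 hi).2
      obtain ⟨hΩ, hcoset⟩ := hw1spec i hpi
      refine ⟨hΩ.1, hset.face i, ?_⟩
      intro z hz hmem
      have hin := coset_sub_mem hcoset hz
      rw [hset.expr] at hmem
      exact hmem.2 (Set.mem_iUnion.2 ⟨i, hin⟩)
    · obtain ⟨B₀, hB₀, hmem2⟩ := Finset.mem_biUnion.1 hp2
      obtain ⟨nn, hnnf, rfl⟩ := Finset.mem_image.1 hmem2
      obtain ⟨hrange, hhas, hpred⟩ := Finset.mem_filter.1 hnnf
      obtain ⟨hΩ, hval, hnotim⟩ := hw2spec B₀ nn hpred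
      obtain ⟨hFfacet, hFzero⟩ := hFFspec B₀ hhas
      refine ⟨hΩ.1, ?_, ?_⟩
      · rw [← hFzero]
        exact isFace_facetSet hFfacet
      · intro z hz hmem
        have hz0 : FF B₀ z = 0 := by
          apply F_vanish_ZB ?_ z hz
          intro a ha
          rw [← hFzero] at ha
          exact (Finset.mem_filter.1 ha).2
        have hvv : FF B₀ (w2 B₀ nn + c + z) = nn := by
          rw [map_add, hz0, add_zero, hval]
        exact hnotim ⟨_, hSsub hmem, hvv⟩
  · intro x hx
    have hxS : x ∈ S := hx.1
    have hxcS : c + x ∉ S := hx.2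
    by_cases hxc : x + c ∈ Sc
    · -- case 1
      have hxcnotS : x + c ∉ S := by rwa [add_comm] at hxcS
      have hxcos : x + c ∈ ⋃ i, coset (b i) (Bf i) := by
        by_contra hnot
        apply hxcnotS
        rw [hset.expr]
        exact ⟨hxc, hnot⟩
      obtain ⟨U, ⟨i, rfl⟩, hiU⟩ := hxcos
      have hpi : pred1 i := ⟨x, hx, hiU⟩
      refine ⟨(w1 i, Bf i), ?_, ?_⟩
      · apply Finset.mem_union_left
        exact Finset.mem_image.2 ⟨i, Finset.mem_filter.2 ⟨Finset.mem_univ i, hpi⟩, rfl⟩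
      · obtain ⟨hΩ, hcoset⟩ := hw1spec i hpi
        have h1 : (x + c) - b i ∈ AddSubgroup.closure ((Bf i : Set (Zd d))) := hiU
        have h2 : (w1 i + c) - b i ∈ AddSubgroup.closure ((Bf i : Set (Zd d))) := hcoset
        have h3 := AddSubgroup.sub_mem _ h1 h2
        have heq : (x + c) - b i - ((w1 i + c) - b i) = x - w1 i := by abel
        rw [heq] at h3
        rw [← toK_sub]
        exact toK_mem_spanK K h3
    · -- case 2
      have hscored := hset.scored
      rw [IsScored] at hscored
      have hxc2 : ¬ (∀ F : Zd d →+ ℤ, IsFacetFn A F → F (x + c) ∈ F '' Sc) := by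
        intro hall
        apply hxc
        rw [hscored]
        exact hall
      push_neg at hxc2
      obtain ⟨F, hFfacet, hFnot⟩ := hxc2
      set B₀ := facetSet A F with hB₀
      have hhas : hasF B₀ := ⟨F, hFfacet, rfl⟩
      have hFFeq : FF B₀ = F := by
        obtain ⟨hfac', hzero'⟩ := hFFspec B₀ hhas
        exact facet_unique hset.latt hfac' hFfacet (by rw [hzero'])
      set nn := F (x + c) with hnn
      have hpred : pred2 B₀ nn := ⟨x, hx, by rw [hFFeq], by rw [hFFeq]; exact hFnot⟩
      have hxSc : x ∈ Sc := hSsub hxS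
      have hlow : (G.image (fun g => FF B₀ g)).min'
          (Finset.Nonempty.image ⟨g₀, hg₀G⟩ _) + FF B₀ c ≤ nn := by
        rw [hG] at hxSc
        obtain ⟨g, hgG, a, haNA, hxeq⟩ := hxSc
        have h5 : nn = F x + F c := by rw [hnn, map_add]
        have h6 : F x = F g + F a := by rw [hxeq, map_add]
        have h7 : 0 ≤ F a := F_nonneg_NA hFfacet.1 a haNA
        have h8 : (G.image (fun g => FF B₀ g)).min'
            (Finset.Nonempty.image ⟨g₀, hg₀G⟩ _) ≤ FF B₀ g :=
          Finset.min'_le _ _ (Finset.mem_image_of_mem _ hgG)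
        rw [hFFeq] at h8 ⊢
        omega
      have hhigh : nn ≤ FF B₀ g₀ + μf B₀ := by
        by_contra hgt
        push_neg at hgt
        have h9 : μf B₀ ≤ nn - FF B₀ g₀ := by omega
        obtain ⟨a, haNA, hFa⟩ := hμfspec B₀ hhas _ h9
        apply hFnot
        have hgm : g₀ + a ∈ Sc := by
          rw [hG]
          exact ⟨g₀, hg₀G, a, haNA, rfl⟩
        refine ⟨g₀ + a, hgm, ?_⟩
        rw [map_add]
        rw [hFFeq] at hFa
        omega
      have hnnrange : nn ∈ rangeB B₀ := Finset.mem_Icc.2 ⟨hlow, hhigh⟩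
      refine ⟨(w2 B₀ nn, B₀), ?_, ?_⟩
      · apply Finset.mem_union_right
        apply Finset.mem_biUnion.2
        refine ⟨B₀, ?_, ?_⟩
        · rw [Finset.mem_powerset, hB₀]
          exact Finset.filter_subset _ _
        · exact Finset.mem_image.2 ⟨nn, Finset.mem_filter.2 ⟨hnnrange, hhas, hpred⟩, rfl⟩
      · obtain ⟨hΩ2, hval2, -⟩ := hw2spec B₀ nn hpred
        rw [hFFeq] at hval2
        have hFdiff : F (x - w2 B₀ nn) = 0 := by
          rw [map_sub]
          have hv1 : F x + F c = nn := by rw [hnn, map_add]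
          have hv2 : F (w2 B₀ nn) + F c = nn := by rw [← map_add]; exact hval2
          omega
        have hker : toK K ((x - w2 B₀ nn)) ∈ LinearMap.ker (Flin K F) := by
          rw [LinearMap.mem_ker, Flin_toK, hFdiff]
          norm_cast
        rw [← facet_ker K hset.latt hFfacet] at hker
        rw [← toK_sub]
        exact hker

end Covering
section LeImpWit

variable {d : ℕ} (K : Type) [Field K] [CharZero K]

set_option linter.unusedSectionVars false
set_option maxHeartbeats 1600000

open MvPolynomial

lemma eval_bind₁'' {σ τ : Type*} (x : σ → K) (f : τ → MvPolynomial σ K)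
    (p : MvPolynomial τ K) :
    MvPolynomial.eval x (MvPolynomial.bind₁ f p) =
      MvPolynomial.eval (fun i => MvPolynomial.eval x (f i)) p := by
  rw [← aeval_eq_eval', ← aeval_eq_eval']
  rw [MvPolynomial.aeval_bind₁]
  congr 1

lemma lin_expand (f : (Fin d → K) →ₗ[K] K) (y : Fin d → K) :
    f y = ∑ i, f (Pi.single i 1) * y i := by
  rw [LinearMap.pi_apply_eq_sum_univ f y]
  refine Finset.sum_congr rfl fun i _ => ?_
  rw [smul_eq_mul, mul_comm]
  congr 2
  funext j
  rw [Pi.single_apply]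
  by_cases h : i = j
  · simp [h]
  · simp [h, Ne.symm h]

lemma spanK_rep (B : Finset (Zd d)) (lam : Fin d → K) (hlam : lam ∈ spanK K B) :
    ∃ t : {x // x ∈ B} → K, lam = ∑ a : {x // x ∈ B}, t a • toK K (a : Zd d) := by
  classical
  have h1 : lam ∈ Submodule.span K ((B.image (toK K) : Finset (Fin d → K)) : Set (Fin d → K)) := by
    rw [Finset.coe_image]
    exact hlam
  rw [Submodule.mem_span_finset] at h1
  obtain ⟨φ, -, hφ⟩ := h1
  refine ⟨fun a => φ (toK K (a : Zd d)), ?_⟩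
  rw [← hφ]
  rw [Finset.sum_image (fun x _ y _ hxy => toK_injective K hxy)]
  rw [← Finset.sum_coe_sort B (fun a => φ (toK K a) • toK K a)]

/-- The containment of vanishing ideals yields a witness. -/
lemma le_imp_wit {m : ℕ} (A : Finset (Zd d)) (Sc S : Set (Zd d)) (b : Fin m → Zd d)
    (Bf : Fin m → Finset (Zd d)) (hset : Setting A Sc S b Bf)
    (Bτ : Finset (Zd d)) (hτ : IsFace A Bτ) (α : Fin d → K) (c : Zd d)
    (hle : vIdeal K (toK K '' Omega S S c) ≤ vIdeal K (aff K α Bτ)) :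
    ∃ B', IsFace A B' ∧ Bτ ⊆ B' ∧ Wit K S B' α c := by
  classical
  haveI : Infinite K := Infinite.of_injective (fun n : ℕ => (n : K)) Nat.cast_injective
  obtain ⟨Gτ, hτA, -, -⟩ := hτ
  by_contra hno
  push_neg at hno
  obtain ⟨PP, hprops, hcover⟩ := covering K A Sc S b Bf hset c
  have hnotin : ∀ p ∈ PP, ∃ lam ∈ spanK K Bτ, α + lam - toK K p.1 ∉ spanK K p.2 := by
    intro p hp
    by_contra hcon
    push_neg at hcon
    obtain ⟨hpS, hpF, hpdisj⟩ := hprops p hp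
    have hBsub : Bτ ⊆ p.2 := by
      intro a ha
      have h0 : α + 0 - toK K p.1 ∈ spanK K p.2 := hcon 0 (Submodule.zero_mem _)
      have h1 : α + toK K a - toK K p.1 ∈ spanK K p.2 :=
        hcon (toK K a) (Submodule.subset_span ⟨a, ha, rfl⟩)
      have h2 : toK K a ∈ spanK K p.2 := by
        have h3 := Submodule.sub_mem _ h1 h0
        have heq : (α + toK K a - toK K p.1) - (α + 0 - toK K p.1) = toK K a := by abel
        rwa [heq] at h3
      exact face_mem_of_spanK K hpF (hτA ha) h2
    have hwit : Wit K S p.2 α c := by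
      refine ⟨p.1, hpS, ?_, hpdisj⟩
      have h0 := hcon 0 (Submodule.zero_mem _)
      rwa [add_zero] at h0
    exact hno p.2 hpF hBsub hwit
  choose lamf hlamf1 hlamf2 using hnotin
  have hsep : ∀ (p : Zd d × Finset (Zd d)) (hp : p ∈ PP), ∃ f : (Fin d → K) →ₗ[K] K,
      (∀ u ∈ spanK K p.2, f u = 0) ∧ f (α + lamf p hp - toK K p.1) = 1 :=
    fun p hp => dual_sep _ _ (hlamf2 p hp)
  choose ff hff1 hff2 using hsep
  set pol : (p : Zd d × Finset (Zd d)) → (p ∈ PP) → MvPolynomial (Fin d) K := fun p hp =>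
    (∑ i, MvPolynomial.C (ff p hp (Pi.single i 1)) * MvPolynomial.X i) -
      MvPolynomial.C (ff p hp (toK K p.1)) with hpol
  have hpoleval : ∀ (p : Zd d × Finset (Zd d)) (hp : p ∈ PP) (y : Fin d → K),
      MvPolynomial.eval y (pol p hp) = ff p hp (y - toK K p.1) := by
    intro p hp y
    rw [hpol]
    simp only [map_sub, MvPolynomial.eval_C, map_sum, map_mul, MvPolynomial.eval_X]
    rw [lin_expand K (ff p hp) y]
  set Q : MvPolynomial (Fin d) K := ∏ p ∈ PP.attach, pol p.1 p.2 with hQ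
  have hQvan : Q ∈ vIdeal K (toK K '' Omega S S c) := by
    rw [mem_vIdeal]
    rintro v ⟨x, hxΩ, rfl⟩
    obtain ⟨p, hpPP, hcov⟩ := hcover x hxΩ
    rw [hQ, map_prod]
    apply Finset.prod_eq_zero (Finset.mem_attach PP ⟨p, hpPP⟩)
    rw [hpoleval]
    exact hff1 p hpPP _ hcov
  have hQaff := hle hQvan
  rw [mem_vIdeal] at hQaff
  -- parametrize the affine subspace α + K Bτ
  set sub : Fin d → MvPolynomial {x // x ∈ Bτ} K := fun i =>
    MvPolynomial.C (α i) + ∑ a : {x // x ∈ Bτ},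
      MvPolynomial.C (toK K (a : Zd d) i) * MvPolynomial.X a with hsub
  have hevalsub : ∀ (h : MvPolynomial (Fin d) K) (t : {x // x ∈ Bτ} → K),
      MvPolynomial.eval t (MvPolynomial.bind₁ sub h) =
        MvPolynomial.eval (α + ∑ a : {x // x ∈ Bτ}, t a • toK K (a : Zd d)) h := by
    intro h t
    rw [eval_bind₁'']
    have hpt : (fun i => MvPolynomial.eval t (sub i)) =
        α + ∑ a : {x // x ∈ Bτ}, t a • toK K (a : Zd d) := by
      funext i
      rw [hsub]
      rw [map_add, MvPolynomial.eval_C, map_sum]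
      rw [Pi.add_apply, Finset.sum_apply]
      congr 1
      apply Finset.sum_congr rfl
      intro a _
      rw [map_mul, MvPolynomial.eval_C, MvPolynomial.eval_X, Pi.smul_apply, smul_eq_mul, mul_comm]
    rw [hpt]
  have hqne : ∀ (p : Zd d × Finset (Zd d)) (hp : p ∈ PP),
      MvPolynomial.bind₁ sub (pol p hp) ≠ 0 := by
    intro p hp h0
    obtain ⟨t, ht⟩ := spanK_rep K Bτ (lamf p hp) (hlamf1 p hp)
    have hev := congrArg (MvPolynomial.eval t) h0
    rw [hevalsub, map_zero, ← ht, hpoleval] at hev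
    rw [hff2 p hp] at hev
    exact one_ne_zero hev
  have hQsubne : MvPolynomial.bind₁ sub Q ≠ 0 := by
    rw [hQ, map_prod]
    exact Finset.prod_ne_zero_iff.2 fun p _ => hqne p.1 p.2
  obtain ⟨t0, ht0⟩ : ∃ t0 : {x // x ∈ Bτ} → K,
      MvPolynomial.eval t0 (MvPolynomial.bind₁ sub Q) ≠ 0 := by
    by_contra hall
    push_neg at hall
    exact hQsubne (MvPolynomial.funext (q := 0) fun y => by rw [hall y, map_zero])
  apply ht0
  rw [hevalsub]
  apply hQaff
  refine ⟨∑ a : {x // x ∈ Bτ}, t0 a • toK K (a : Zd d), ?_, rfl⟩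
  exact Submodule.sum_mem _ fun a _ =>
    Submodule.smul_mem _ _ (Submodule.subset_span ⟨(a : Zd d), a.2, rfl⟩)

end LeImpWit
/-- Theorem 4.11. For `α ∈ K^d`, `c ∈ ℤ^d` and a face `τ`:
`α ∼_{S,τ} α + c` (equality of all `E(S)_{τ'}` for faces `τ' ⊇ τ`) if and only if
`𝕀(τ) + α ∼_S 𝕀(τ) + α + c`, i.e. `𝕀(Ω_S(c)) ⊄ 𝕀(α + Kτ)` and
`𝕀(Ω_S(−c)) ⊄ 𝕀(α + c + Kτ)`. -/
theorem sim_iff_ideal_sim {d m : ℕ}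
    (K : Type) [Field K] [IsAlgClosed K] [CharZero K]
    (A : Finset (Zd d)) (Sc S : Set (Zd d))
    (b : Fin m → Zd d) (Bf : Fin m → Finset (Zd d))
    (hset : Setting A Sc S b Bf)
    (Bτ : Finset (Zd d)) (hτ : IsFace A Bτ)
    (α : Fin d → K) (c : Zd d) :
    (∀ B' : Finset (Zd d), IsFace A B' → Bτ ⊆ B' →
        ∀ lam, (memE K S B' α lam ↔ memE K S B' (α + toK K c) lam)) ↔
      ((¬ vIdeal K (toK K '' Omega S S c) ≤ vIdeal K (aff K α Bτ)) ∧
       (¬ vIdeal K (toK K '' Omega S S (-c)) ≤ vIdeal K (aff K (α + toK K c) Bτ))) := by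
  constructor
  · intro hLHS
    constructor
    · intro hle
      obtain ⟨B', hB'F, hB'sub, hwit⟩ := le_imp_wit K A Sc S b Bf hset Bτ hτ α c hle
      exact ((lhs_iff_not_wit K S B' α c).1 (hLHS B' hB'F hB'sub)) (Or.inl hwit)
    · intro hle
      obtain ⟨B', hB'F, hB'sub, hwit⟩ :=
        le_imp_wit K A Sc S b Bf hset Bτ hτ (α + toK K c) (-c) hle
      exact ((lhs_iff_not_wit K S B' α c).1 (hLHS B' hB'F hB'sub)) (Or.inr hwit)
  · rintro ⟨h1, h2⟩ B' hB'F hB'sub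
    have hnot : ¬ (Wit K S B' α c ∨ Wit K S B' (α + toK K c) (-c)) := by
      rintro (hw | hw)
      · exact h1 (wit_imp_le K A Sc S b Bf hset Bτ B' hB'sub hB'F α c hw)
      · exact h2 (wit_imp_le K A Sc S b Bf hset Bτ B' hB'sub hB'F (α + toK K c) (-c) hw)
    exact (lhs_iff_not_wit K S B' α c).2 hnot

end SaitoTakahashi
end
end

section
/- (Robson's Lemma) Let A be a right ideal of a right Noetherian ring S, and let R be a subring of S containing A. Suppose S is finitely generated as a right R-module and S/A is a Noetherian right R-module. Then R is right Noetherian. -/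
open Function

noncomputable section

namespace SaitoTakahashi

/-- `I` is a right ideal of `S` (as an additive subgroup closed under right
multiplication). -/
def IsRightIdeal (S : Type*) [Ring S] (I : AddSubgroup S) : Prop :=
  ∀ x ∈ I, ∀ s : S, x * s ∈ I

/-- A ring is right Noetherian: every ascending chain of right ideals stabilizes. -/
def IsRightNoetherianRing (S : Type*) [Ring S] : Prop :=
  ∀ N : ℕ →o AddSubgroup S, (∀ n, IsRightIdeal S (N n)) → ∃ n, ∀ k, n ≤ k → N k = N n

namespace RobsonAux

variable {S : Type*} [Ring S]

def TL (l : List S) : AddSubgroup S :=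
  l.foldr (fun t T => (AddMonoidHom.mulLeft t).range ⊔ T) ⊥

lemma TL_nil : TL ([] : List S) = ⊥ := rfl

lemma TL_cons (t : S) (l : List S) :
    TL (t :: l) = (AddMonoidHom.mulLeft t).range ⊔ TL l := rfl

lemma mem_TL_of_mem {t : S} {l : List S} (ht : t ∈ l) (s : S) : t * s ∈ TL l := by
  induction l with
  | nil => simp at ht
  | cons a l ih =>
    rw [TL_cons]
    rcases List.mem_cons.mp ht with h | h
    · subst h
      exact AddSubgroup.mem_sup_left (AddMonoidHom.mem_range.mpr ⟨s, rfl⟩)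
    · exact AddSubgroup.mem_sup_right (ih h)

lemma TL_mul_right {l : List S} {x : S} (hx : x ∈ TL l) (s : S) : x * s ∈ TL l := by
  induction l generalizing x with
  | nil =>
    rw [TL_nil] at hx ⊢
    simp [AddSubgroup.mem_bot] at hx
    simp [hx]
  | cons t l ih =>
    rw [TL_cons] at hx ⊢
    rcases AddSubgroup.mem_sup.mp hx with ⟨y, hy, z, hz, rfl⟩
    rcases AddMonoidHom.mem_range.mp hy with ⟨u, rfl⟩
    rw [add_mul]
    refine AddSubgroup.add_mem _ (AddSubgroup.mem_sup_left ?_) (AddSubgroup.mem_sup_right (ih hz))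
    exact AddMonoidHom.mem_range.mpr ⟨u * s, by simp [mul_assoc]⟩

/-- Key lemma: an ascending chain of right-`R`-stable additive subgroups of a
finitely generated right ideal `t₁S + ⋯ + tₚS`, with `tᵢA` inside the chain,
stabilizes (induction on the generators, using `hSA` for each cyclic layer). -/
lemma key (R : Subring S) (A : AddSubgroup S)
    (hSA : ∀ N : ℕ →o AddSubgroup S,
        (∀ n, A ≤ N n ∧ ∀ x ∈ N n, ∀ r ∈ R, x * r ∈ N n) →
        ∃ n, ∀ k, n ≤ k → N k = N n) :
    ∀ (l : List S) (M : ℕ →o AddSubgroup S),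
      (∀ n, ∀ x ∈ M n, ∀ r ∈ R, x * r ∈ M n) →
      (∀ n, M n ≤ TL l) →
      (∀ t ∈ l, ∀ a ∈ A, t * a ∈ M 0) →
      ∃ n, ∀ k, n ≤ k → M k = M n := by
  intro l
  induction l with
  | nil =>
    intro M _ hle _
    refine ⟨0, fun k _ => ?_⟩
    have h1 := hle k; have h0 := hle 0
    rw [TL_nil, le_bot_iff] at h1 h0
    rw [h1, h0]
  | cons t l ih =>
    intro M hst hle hta
    -- the chain intersected with TL l
    obtain ⟨n₁, hn₁⟩ := ih ⟨fun n => M n ⊓ TL l, fun a b h => inf_le_inf (M.monotone h) le_rfl⟩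
      (fun n x hx r hr => AddSubgroup.mem_inf.mpr
        ⟨hst n x (AddSubgroup.mem_inf.mp hx).1 r hr,
         TL_mul_right (AddSubgroup.mem_inf.mp hx).2 r⟩)
      (fun n => inf_le_right)
      (fun t' ht' a ha => AddSubgroup.mem_inf.mpr
        ⟨hta t' (List.mem_cons_of_mem _ ht') a ha, mem_TL_of_mem ht' a⟩)
    -- the layer chain U n = (t·)⁻¹ (M n ⊔ TL l)
    have hsupstable : ∀ n, ∀ x ∈ M n ⊔ TL l, ∀ r ∈ R, x * r ∈ M n ⊔ TL l := by
      intro n x hx r hr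
      rcases AddSubgroup.mem_sup.mp hx with ⟨y, hy, z, hz, rfl⟩
      rw [add_mul]
      exact AddSubgroup.add_mem _ (AddSubgroup.mem_sup_left (hst n y hy r hr))
        (AddSubgroup.mem_sup_right (TL_mul_right hz r))
    obtain ⟨n₂, hn₂⟩ := hSA
      ⟨fun n => (M n ⊔ TL l).comap (AddMonoidHom.mulLeft t),
        fun a b h => AddSubgroup.comap_mono (sup_le_sup_right (M.monotone h) _)⟩
      (by
        intro n
        constructor
        · intro a ha
          exact AddSubgroup.mem_comap.mpr
            (AddSubgroup.mem_sup_left (M.monotone (Nat.zero_le n) (hta t List.mem_cons_self a ha)))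
        · intro x hx r hr
          have hx' : t * x ∈ M n ⊔ TL l := AddSubgroup.mem_comap.mp hx
          refine AddSubgroup.mem_comap.mpr ?_
          show t * (x * r) ∈ _
          rw [← mul_assoc]
          exact hsupstable n _ hx' r hr)
    refine ⟨max n₁ n₂, fun k hk => ?_⟩
    refine le_antisymm ?_ (M.monotone hk)
    intro x hx
    have hxT : x ∈ TL (t :: l) := hle k hx
    rw [TL_cons] at hxT
    rcases AddSubgroup.mem_sup.mp hxT with ⟨y, hy, z, hz, rfl⟩
    rcases AddMonoidHom.mem_range.mp hy with ⟨s, rfl⟩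
    have hts : (AddMonoidHom.mulLeft t) s = t * s := rfl
    rw [hts] at hx ⊢
    have hsk : s ∈ (M k ⊔ TL l).comap (AddMonoidHom.mulLeft t) := by
      refine AddSubgroup.mem_comap.mpr ?_
      show t * s ∈ M k ⊔ TL l
      have : t * s = (t * s + z) - z := by abel
      rw [this]
      exact AddSubgroup.sub_mem _ (AddSubgroup.mem_sup_left hx) (AddSubgroup.mem_sup_right hz)
    have hUeq : ((M k ⊔ TL l).comap (AddMonoidHom.mulLeft t) : AddSubgroup S)
        = (M (max n₁ n₂) ⊔ TL l).comap (AddMonoidHom.mulLeft t) := by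
      have e1 := hn₂ k ((le_max_right n₁ n₂).trans hk)
      have e2 := hn₂ (max n₁ n₂) (le_max_right n₁ n₂)
      exact e1.trans e2.symm
    have hsm : t * s ∈ M (max n₁ n₂) ⊔ TL l := AddSubgroup.mem_comap.mp (hUeq ▸ hsk)
    rcases AddSubgroup.mem_sup.mp hsm with ⟨m, hm, z', hz', hzz⟩
    have hsum : z' + z = (t * s + z) - m := by rw [← hzz]; abel
    have hmem : z' + z ∈ M k ⊓ TL l := by
      refine AddSubgroup.mem_inf.mpr ⟨?_, AddSubgroup.add_mem _ hz' hz⟩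
      rw [hsum]
      exact AddSubgroup.sub_mem _ hx (M.monotone hk hm)
    have hM'eq : (M k ⊓ TL l : AddSubgroup S) = M (max n₁ n₂) ⊓ TL l := by
      have e1 := hn₁ k ((le_max_left n₁ n₂).trans hk)
      have e2 := hn₁ (max n₁ n₂) (le_max_left n₁ n₂)
      exact e1.trans e2.symm
    have hmem2 : z' + z ∈ M (max n₁ n₂) := (AddSubgroup.mem_inf.mp (hM'eq ▸ hmem)).1
    have : t * s + z = m + (z' + z) := by rw [hsum]; abel
    rw [this]
    exact AddSubgroup.add_mem _ hm hmem2

/-- The right ideal `M·S` of `S` generated by an additive subgroup `M`. -/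
def MSgen (M : AddSubgroup S) : AddSubgroup S :=
  AddSubgroup.closure {x | ∃ m ∈ M, ∃ s : S, x = m * s}

lemma self_le_MSgen (M : AddSubgroup S) : M ≤ MSgen M := fun m hm =>
  AddSubgroup.subset_closure ⟨m, hm, 1, (mul_one m).symm⟩

lemma MSgen_mono {M M' : AddSubgroup S} (h : M ≤ M') : MSgen M ≤ MSgen M' :=
  AddSubgroup.closure_mono (fun x ⟨m, hm, s, hs⟩ => ⟨m, h hm, s, hs⟩)

lemma MSgen_mul_right (M : AddSubgroup S) {x : S} (hx : x ∈ MSgen M) (s : S) :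
    x * s ∈ MSgen M := by
  induction hx using AddSubgroup.closure_induction with
  | mem x hxg =>
    obtain ⟨m, hm, u, rfl⟩ := hxg
    exact AddSubgroup.subset_closure ⟨m, hm, u * s, mul_assoc m u s⟩
  | zero => simpa using (MSgen M).zero_mem
  | add x y _ _ hx hy => rw [add_mul]; exact AddSubgroup.add_mem _ hx hy
  | neg x _ hx => rw [neg_mul]; exact AddSubgroup.neg_mem _ hx

/-- Any ascending chain of right-`R`-stable additive subgroups of `S`
stabilizes. -/
lemma crux (R : Subring S) (A : AddSubgroup S) (hAR : (A : Set S) ⊆ (R : Set S))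
    (hSnoeth : ∀ N : ℕ →o AddSubgroup S,
        (∀ n, ∀ x ∈ N n, ∀ s : S, x * s ∈ N n) → ∃ n, ∀ k, n ≤ k → N k = N n)
    (hSA : ∀ N : ℕ →o AddSubgroup S,
        (∀ n, A ≤ N n ∧ ∀ x ∈ N n, ∀ r ∈ R, x * r ∈ N n) →
        ∃ n, ∀ k, n ≤ k → N k = N n)
    (M : ℕ →o AddSubgroup S)
    (hst : ∀ n, ∀ x ∈ M n, ∀ r ∈ R, x * r ∈ M n) :
    ∃ n, ∀ k, n ≤ k → M k = M n := by
  obtain ⟨n₀, hn₀⟩ := hSnoeth ⟨fun n => MSgen (M n), fun a b h => MSgen_mono (M.monotone h)⟩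
    (fun n x hx s => MSgen_mul_right _ hx s)
  -- finitely generate `MSgen (M n₀)` by elements of `M n₀`
  have hfin : ∃ l : List S, (∀ t ∈ l, t ∈ M n₀) ∧ TL l = MSgen (M n₀) := by
    by_contra hcon
    push_neg at hcon
    have hTLle : ∀ l : List S, (∀ t ∈ l, t ∈ M n₀) → TL l ≤ MSgen (M n₀) := by
      intro l hl
      induction l with
      | nil => rw [TL_nil]; exact bot_le
      | cons t l ihl =>
        rw [TL_cons]
        refine sup_le ?_ (ihl fun x hx => hl x (List.mem_cons_of_mem _ hx))
        rintro x ⟨s, rfl⟩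
        exact AddSubgroup.subset_closure ⟨t, hl t List.mem_cons_self, s, rfl⟩
    have hex : ∀ l : List S, (∀ t ∈ l, t ∈ M n₀) → ∃ m, m ∈ M n₀ ∧ ∃ s : S, m * s ∉ TL l := by
      intro l hl
      by_contra h2
      push_neg at h2
      refine hcon l hl (le_antisymm (hTLle l hl) ?_)
      refine AddSubgroup.closure_le _ |>.mpr ?_
      rintro x ⟨m, hm, s, rfl⟩
      exact h2 m hm s
    let step : {l : List S // ∀ t ∈ l, t ∈ M n₀} → {l : List S // ∀ t ∈ l, t ∈ M n₀} :=
      fun L => ⟨(hex L.1 L.2).choose :: L.1, by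
        intro x hx
        rcases List.mem_cons.mp hx with h | h
        · exact h ▸ (hex L.1 L.2).choose_spec.1
        · exact L.2 x h⟩
    let L : ℕ → {l : List S // ∀ t ∈ l, t ∈ M n₀} :=
      fun n => Nat.rec ⟨[], by simp⟩ (fun _ ih => step ih) n
    have hLsucc : ∀ n, L (n + 1) = step (L n) := fun n => rfl
    obtain ⟨n, hn⟩ := hSnoeth
      ⟨fun n => TL (L n).1, monotone_nat_of_le_succ (fun n => by
        rw [hLsucc]
        exact le_sup_right)⟩
      (fun n x hx s => TL_mul_right hx s)
    obtain ⟨hm, s, hs⟩ := (hex (L n).1 (L n).2).choose_spec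
    have hmem : (hex (L n).1 (L n).2).choose * s ∈ TL (L (n + 1)).1 := by
      rw [hLsucc]
      exact mem_TL_of_mem List.mem_cons_self s
    have heq : TL (L (n + 1)).1 = TL (L n).1 := hn (n + 1) (Nat.le_succ n)
    rw [heq] at hmem
    exact hs hmem
  obtain ⟨l, hl, hTl⟩ := hfin
  obtain ⟨n, hn⟩ := key R A hSA l ⟨fun n => M (n₀ + n), fun a b h => M.monotone (by omega)⟩
    (fun n x hx r hr => hst _ x hx r hr)
    (fun n => by
      refine le_trans (self_le_MSgen _) ?_
      have := hn₀ (n₀ + n) (by omega)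
      rw [hTl]
      exact le_of_eq this)
    (fun t ht a ha => by
      show t * a ∈ M (n₀ + 0)
      rw [Nat.add_zero]
      exact hst n₀ t (hl t ht) a (hAR ha))
  refine ⟨n₀ + n, fun k hk => ?_⟩
  have h1 : M (n₀ + (k - n₀)) = M (n₀ + n) := hn (k - n₀) (by omega)
  have h2 : n₀ + (k - n₀) = k := by omega
  rw [h2] at h1
  exact h1

end RobsonAux

/-- Robson's Lemma. Let `A` be a right ideal of a right
Noetherian ring `S`, and `R` a subring of `S` containing `A`. If `S` is finitely
generated as a right `R`-module and `S/A` is a Noetherian right `R`-module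
(ACC on right `R`-submodules of `S` containing `A`), then `R` is right Noetherian. -/


theorem robson_lemma (S : Type*) [Ring S] (R : Subring S) (A : AddSubgroup S)
    (hAR : (A : Set S) ⊆ (R : Set S))
    (hAideal : IsRightIdeal S A)
    (hSnoeth : IsRightNoetherianRing S)
    (hfg : ∃ G : Finset S, ∀ s : S, ∃ f : S → R, s = ∑ g ∈ G, g * (f g : S))
    (hSA : ∀ N : ℕ →o AddSubgroup S,
        (∀ n, A ≤ N n ∧ ∀ x ∈ N n, ∀ r ∈ R, x * r ∈ N n) →
        ∃ n, ∀ k, n ≤ k → N k = N n) :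
    IsRightNoetherianRing R := by
  intro N hN
  have hJst : ∀ n, ∀ x ∈ (N n).map (R.subtype : ↥R →+ S), ∀ r ∈ R,
      x * r ∈ (N n).map (R.subtype : ↥R →+ S) := by
    intro n x hx r hr
    obtain ⟨i, hi, rfl⟩ := AddSubgroup.mem_map.mp hx
    exact AddSubgroup.mem_map.mpr ⟨i * ⟨r, hr⟩, hN n i hi ⟨r, hr⟩, rfl⟩
  obtain ⟨n, hn⟩ := RobsonAux.crux R A hAR hSnoeth hSA
    ⟨fun n => (N n).map (R.subtype : ↥R →+ S),
      fun a b h => AddSubgroup.map_mono (N.monotone h)⟩ hJst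
  refine ⟨n, fun k hk => ?_⟩
  refine le_antisymm ?_ (N.monotone hk)
  intro x hx
  have hx' : (x : S) ∈ (N k).map (R.subtype : ↥R →+ S) :=
    AddSubgroup.mem_map.mpr ⟨x, hx, rfl⟩
  have heq : (N k).map (R.subtype : ↥R →+ S) = (N n).map (R.subtype : ↥R →+ S) := hn k hk
  rw [heq] at hx'
  obtain ⟨y, hy, hyx⟩ := AddSubgroup.mem_map.mp hx'
  exact (Subtype.ext hyx : y = x) ▸ hy

end SaitoTakahashi
end
end

section
/- With S an ℕA-set as in situation (6) satisfying ℬ ≠ ∅, fix (b_τ) ∈ ℬ and define ω(S) as above. For any face τ ∈ F̃: ω(S) + ℤ(A∩τ) = { a ∈ ℤ^d : b_{τ'} ∉ E(S)_{τ'}(−a) for every τ' ∈ F̃ with τ' ⊇ τ }. -/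
open Function

noncomputable section

namespace SaitoTakahashi

/-- `B` belongs to `F̃ = {facets of ℝ≥0 A} ∪ {τ₁,…,τ_m}` (faces encoded by
their sets of lattice generators `A ∩ τ`). -/
def InFtilde {d m : ℕ} (A : Finset (Zd d)) (Bf : Fin m → Finset (Zd d))
    (B : Finset (Zd d)) : Prop :=
  (∃ F : Zd d →+ ℤ, IsFacetFn A F ∧ B = facetSet A F) ∨ ∃ i, B = Bf i

/-- The tuple `(b_τ)_{τ∈F̃}` (given by representatives `bt B ∈ ℤ^d`) belongs to
the set `ℬ`: each `b_τ ∈ (Kτ ∩ ℤ^d)/ℤ(A∩τ)`, and for all `i` and all `τ ∈ F̃`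
with `τ ⊇ τᵢ` there exists `j` with `τⱼ = τ` and
`bᵢ + b_{τᵢ} ≡ bⱼ + b_τ mod ℤ(A∩τ)`. -/
def MemB {d m : ℕ} (A : Finset (Zd d)) (b : Fin m → Zd d)
    (Bf : Fin m → Finset (Zd d)) (bt : Finset (Zd d) → Zd d) : Prop :=
  (∀ B, InFtilde A Bf B → toR (bt B) ∈ Submodule.span ℝ (toR '' (B : Set (Zd d)))) ∧
  ∀ i, ∀ B, InFtilde A Bf B → Bf i ⊆ B →
    ∃ j, Bf j = B ∧
      (b i + bt (Bf i)) - (b j + bt B) ∈ AddSubgroup.closure (B : Set (Zd d))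

/-- `ω(S) = { a ∈ ℤ^d : −a − b_τ ∉ S + ℤ(A∩τ) for each τ ∈ F̃ }`. -/
def omegaS {d m : ℕ} (A : Finset (Zd d)) (S : Set (Zd d))
    (Bf : Fin m → Finset (Zd d)) (bt : Finset (Zd d) → Zd d) : Set (Zd d) :=
  { a | ∀ B : Finset (Zd d), InFtilde A Bf B → -a - bt B ∉ plusZ S B }

end SaitoTakahashi

namespace SaitoTakahashi

/-- Every member of `F̃` is a face. -/
lemma isFace_of_inFtilde {d m : ℕ} {A : Finset (Zd d)} {Bf : Fin m → Finset (Zd d)}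
    (hface : ∀ i, IsFace A (Bf i)) {B : Finset (Zd d)} (h : InFtilde A Bf B) :
    IsFace A B := by
  rcases h with ⟨F, hF, rfl⟩ | ⟨i, rfl⟩
  · exact ⟨F, Finset.filter_subset _ _, hF.1, fun a ha => by
      simp [facetSet, Finset.mem_filter, ha]⟩
  · exact hface i

lemma G_nonneg_NA {d : ℕ} {A : Finset (Zd d)} (G : Zd d →+ ℤ)
    (hG : ∀ a ∈ A, 0 ≤ G a) : ∀ x ∈ NA A, 0 ≤ G x := by
  intro x hx
  induction hx using AddSubmonoid.closure_induction with
  | mem y hy => exact hG y hy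
  | zero => simp
  | add y z _ _ hy hz => rw [map_add]; exact add_nonneg hy hz

lemma G_zero_closure {d : ℕ} {B : Finset (Zd d)} (G : Zd d →+ ℤ)
    (hG : ∀ x ∈ B, G x = 0) : ∀ z ∈ AddSubgroup.closure (B : Set (Zd d)), G z = 0 := by
  intro z hz
  induction hz using AddSubgroup.closure_induction with
  | mem y hy => exact hG y hy
  | zero => simp
  | add y w _ _ hy hw => rw [map_add, hy, hw]; ring
  | neg y _ hy => rw [map_neg, hy]; ring

/-- Lower bound for a functional nonnegative on `A` over a subset of a f.g. `ℕA`-set. -/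
lemma exists_lowerBound {d : ℕ} {A : Finset (Zd d)} {Sc S : Set (Zd d)}
    (hfg : IsFGNASet A Sc) (hS : S ⊆ Sc) (G : Zd d →+ ℤ)
    (hG : ∀ a ∈ A, 0 ≤ G a) : ∃ M : ℤ, ∀ t ∈ S, M ≤ G t := by
  obtain ⟨-, GG, hGG⟩ := hfg
  rcases GG.eq_empty_or_nonempty with rfl | hne
  · exact ⟨0, fun t ht => by
      have := hS ht; rw [hGG] at this; simp at this⟩
  · refine ⟨(GG.image (⇑G)).min' (hne.image _), fun t ht => ?_⟩
    have := hS ht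
    rw [hGG] at this
    obtain ⟨g, hg, x, hx, rfl⟩ := this
    have h1 : (GG.image (⇑G)).min' (hne.image _) ≤ G g :=
      Finset.min'_le _ _ (Finset.mem_image_of_mem _ hg)
    have h2 : 0 ≤ G x := G_nonneg_NA G hG x hx
    rw [map_add]; linarith

lemma plusZ_add_mem {d : ℕ} {S : Set (Zd d)} {B : Finset (Zd d)} {x z : Zd d}
    (hx : x ∈ plusZ S B) (hz : z ∈ AddSubgroup.closure (B : Set (Zd d))) :
    x + z ∈ plusZ S B := by
  obtain ⟨s, hs, w, hw, rfl⟩ := hx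
  exact ⟨s, hs, w + z, AddSubgroup.add_mem _ hw hz, by rw [add_assoc]⟩

/-- Combine finitely many eventual bounds into a single uniform one. -/
lemma exists_uniform {α : Type*} (s : Finset α) (P : α → ℕ → Prop)
    (h : ∀ x ∈ s, ∃ n, ∀ n' ≥ n, P x n') : ∃ N, ∀ x ∈ s, ∀ n' ≥ N, P x n' := by
  classical
  induction s using Finset.induction_on with
  | empty => exact ⟨0, by simp⟩
  | @insert a s ha ih =>
    obtain ⟨N, hN⟩ := ih fun x hx => h x (Finset.mem_insert_of_mem hx)
    obtain ⟨n, hn⟩ := h a (Finset.mem_insert_self a s)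
    refine ⟨max n N, fun x hx n' hn' => ?_⟩
    rcases Finset.mem_insert.mp hx with rfl | hx
    · exact hn _ (le_trans (le_max_left _ _) hn')
    · exact hN x hx _ (le_trans (le_max_right _ _) hn')

/-- Lemma 5.7. For `τ ∈ F̃`:
`ω(S) + ℤ(A∩τ) = { a ∈ ℤ^d : b_{τ'} ∉ E(S)_{τ'}(−a) for every τ' ∈ F̃ with τ' ⊇ τ }`. -/
theorem omegaS_plusZ {d m : ℕ}
    (A : Finset (Zd d)) (Sc S : Set (Zd d))
    (b : Fin m → Zd d) (Bf : Fin m → Finset (Zd d))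
    (hset : Setting A Sc S b Bf) (hirr : Irredundant Sc S b Bf)
    (hSna : IsNASet A S)
    (bt : Finset (Zd d) → Zd d) (hbt : MemB A b Bf bt)
    (Bτ : Finset (Zd d)) (hτ : InFtilde A Bf Bτ) :
    plusZ (omegaS A S Bf bt) Bτ =
      { a : Zd d | ∀ B : Finset (Zd d), InFtilde A Bf B → Bτ ⊆ B →
          -a - bt B ∉ plusZ S B } := by
  classical
  have hSSc : S ⊆ Sc := by rw [hset.expr]; exact Set.diff_subset
  have hfaces : ∀ {B : Finset (Zd d)}, InFtilde A Bf B → IsFace A B :=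
    fun h => isFace_of_inFtilde hset.face h
  ext a
  constructor
  · -- easy inclusion
    rintro ⟨s, hs, z, hz, rfl⟩ B hB hsub hmem
    have hzB : z ∈ AddSubgroup.closure (B : Set (Zd d)) :=
      AddSubgroup.closure_mono (by exact_mod_cast hsub) hz
    apply hs B hB
    have : (-(s + z) - bt B) + z ∈ plusZ S B := plusZ_add_mem hmem hzB
    convert this using 1
    abel
  · -- hard inclusion
    intro ha
    obtain ⟨-, hBτA, -, -⟩ := hfaces hτ
    set v : Zd d := ∑ x ∈ Bτ, x with hv_def
    have hv : v ∈ AddSubgroup.closure (Bτ : Set (Zd d)) :=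
      AddSubgroup.sum_mem _ fun x hx => AddSubgroup.subset_closure hx
    -- uniform bound over all B ⊆ A
    have key : ∀ B ∈ A.powerset, ∃ n : ℕ, ∀ n' ≥ n,
        InFtilde A Bf B → ¬ Bτ ⊆ B → -(a + n' • v) - bt B ∉ plusZ S B := by
      intro B _
      by_cases hcase : InFtilde A Bf B ∧ ¬ Bτ ⊆ B
      · obtain ⟨hB, hsub⟩ := hcase
        obtain ⟨G, hBA, hGpos, hGiff⟩ := hfaces hB
        obtain ⟨M, hM⟩ := exists_lowerBound hset.fg hSSc G hGpos
        obtain ⟨x0, hx0τ, hx0B⟩ := Finset.not_subset.mp hsub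
        have hx0A : x0 ∈ A := hBτA hx0τ
        have hGx0 : 1 ≤ G x0 := by
          have h1 : 0 ≤ G x0 := hGpos x0 hx0A
          have h2 : G x0 ≠ 0 := fun h => hx0B ((hGiff x0 hx0A).mp h)
          omega
        have hGv : 1 ≤ G v := by
          have : G v = ∑ x ∈ Bτ, G x := map_sum G _ _
          rw [this]
          calc (1 : ℤ) ≤ G x0 := hGx0
            _ ≤ ∑ x ∈ Bτ, G x :=
              Finset.single_le_sum (fun x hx => hGpos x (hBτA hx)) hx0τ
        refine ⟨(G (-a - bt B) - M + 1).toNat, fun n' hn' _ _ hmem => ?_⟩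
        obtain ⟨t, ht, z, hz, heq⟩ := hmem
        have hGz : G z = 0 :=
          G_zero_closure G (fun x hx => (hGiff x (hBA hx)).mpr hx) z hz
        have hGt : M ≤ G t := hM t ht
        have happ : G (-a - bt B) - (n' : ℤ) * G v = G t := by
          have h0 := congrArg G heq
          rw [map_add, hGz, add_zero, map_sub, map_neg, map_add, map_nsmul] at h0
          rw [map_sub, map_neg]
          simp only [nsmul_eq_mul] at h0
          push_cast at h0 ⊢
          linarith
        have hn'Z : G (-a - bt B) - M + 1 ≤ (n' : ℤ) := by
          calc G (-a - bt B) - M + 1 ≤ ((G (-a - bt B) - M + 1).toNat : ℤ) :=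
                Int.self_le_toNat _
            _ ≤ (n' : ℤ) := by exact_mod_cast hn'
        have hmul : (n' : ℤ) * 1 ≤ (n' : ℤ) * G v :=
          mul_le_mul_of_nonneg_left hGv (by positivity)
        linarith
      · exact ⟨0, fun n' _ hB hsub => absurd ⟨hB, hsub⟩ hcase⟩
    obtain ⟨N, hN⟩ := exists_uniform A.powerset _ key
    refine ⟨a + N • v, ?_, -(N • v),
      AddSubgroup.neg_mem _ (AddSubgroup.nsmul_mem _ hv N), by abel⟩
    intro B hB hmem
    have hBA : B ⊆ A := (hfaces hB).choose_spec.1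
    by_cases hsub : Bτ ⊆ B
    · apply ha B hB hsub
      have hNv : (N • v : Zd d) ∈ AddSubgroup.closure (B : Set (Zd d)) :=
        AddSubgroup.closure_mono (by exact_mod_cast hsub) (AddSubgroup.nsmul_mem _ hv N)
      have : (-(a + N • v) - bt B) + N • v ∈ plusZ S B := plusZ_add_mem hmem hNv
      convert this using 1
      abel
    · exact hN B (Finset.mem_powerset.mpr hBA) N le_rfl hB hsub hmem

end SaitoTakahashi
end
end

section
/- With S, (b_τ) ∈ ℬ, and ω(S) as above, for every facet σ and every λ ∈ ℤ^d ∩ Kσ (taken mod ℤ(A∩σ)): λ ∈ E(ω(S))_σ(−a) if and only if b_σ − λ ∉ E(S)_σ(a). Equivalently, ℤ^d is the disjoint union of ω(S) + ℤ(A∩σ) and −[b_σ + S + ℤ(A∩σ)]. -/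
open Function

noncomputable section

namespace SaitoTakahashi

variable {d : ℕ}

private lemma closure_apply_eq_zero (B : Finset (Zd d)) (G : Zd d →+ ℤ)
    (h : ∀ a ∈ B, G a = 0) : ∀ z ∈ AddSubgroup.closure (B : Set (Zd d)), G z = 0 := by
  intro z hz
  have hle : AddSubgroup.closure (B : Set (Zd d)) ≤ G.ker := by
    rw [AddSubgroup.closure_le]; intro a ha; exact h a ha
  exact AddMonoidHom.mem_ker.mp (hle hz)

private lemma na_nonneg (A : Finset (Zd d)) (G : Zd d →+ ℤ) (h : ∀ a ∈ A, 0 ≤ G a) :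
    ∀ n ∈ NA A, 0 ≤ G n := by
  intro n hn
  induction hn using AddSubmonoid.closure_induction with
  | mem a ha => exact h a ha
  | zero => simp
  | add x y _ _ hx hy => simp only [map_add]; omega

/-- The real linear extension of an integral linear form. -/
private noncomputable def extR (G : Zd d →+ ℤ) : (Fin d → ℝ) →ₗ[ℝ] ℝ :=
  ∑ i : Fin d, (G (Pi.single i 1) : ℝ) • (LinearMap.proj i)

private lemma extR_toR (G : Zd d →+ ℤ) (w : Zd d) : extR G (toR w) = (G w : ℝ) := by
  have hw : G w = ∑ i, w i * G (Pi.single i 1) := by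
    conv_lhs => rw [← Finset.univ_sum_single w]
    rw [map_sum]
    congr 1; ext i
    have h1 : Pi.single i (w i) = w i • (Pi.single i (1:ℤ) : Zd d) := by
      rw [← Pi.single_smul]; simp
    rw [h1, map_zsmul, smul_eq_mul]
  rw [hw]
  simp [extR, toR, LinearMap.sum_apply]
  exact Finset.sum_congr rfl fun i _ => mul_comm _ _

private lemma exists_lb (A : Finset (Zd d)) (Sc S : Set (Zd d)) (hS : S ⊆ Sc)
    (hfg : IsFGNASet A Sc) (G : Zd d →+ ℤ) (h : ∀ a ∈ A, 0 ≤ G a) :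
    ∃ m : ℤ, ∀ s ∈ S, m ≤ G s := by
  obtain ⟨-, Gen, hGen⟩ := hfg
  by_cases hne : (Gen.image G).Nonempty
  · refine ⟨(Gen.image G).min' hne, fun s hs => ?_⟩
    have hsc : s ∈ { x | ∃ g ∈ Gen, ∃ a ∈ NA A, x = g + a } := by
      rw [← hGen]; exact hS hs
    obtain ⟨g, hg, n, hn, rfl⟩ := hsc
    have h1 : (Gen.image G).min' hne ≤ G g :=
      Finset.min'_le _ _ (Finset.mem_image_of_mem G hg)
    have h2 : 0 ≤ G n := na_nonneg A G h n hn
    rw [map_add]; omega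
  · refine ⟨0, fun s hs => ?_⟩
    have hsc : s ∈ { x | ∃ g ∈ Gen, ∃ a ∈ NA A, x = g + a } := by
      rw [← hGen]; exact hS hs
    obtain ⟨g, hg, -⟩ := hsc
    exact absurd ⟨G g, Finset.mem_image_of_mem G hg⟩ hne

private lemma eventually_not_mem (A : Finset (Zd d)) (Sc S : Set (Zd d)) (hS : S ⊆ Sc)
    (hfg : IsFGNASet A Sc) (B : Finset (Zd d)) (G : Zd d →+ ℤ)
    (hpos : ∀ a ∈ A, 0 ≤ G a) (hB0 : ∀ a ∈ B, G a = 0)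
    (x c z₀ : Zd d) (hz₀ : 1 ≤ G z₀) :
    ∃ N₀ : ℕ, ∀ N ≥ N₀, -(x + N • z₀) - c ∉ plusZ S B := by
  obtain ⟨m, hm⟩ := exists_lb A Sc S hS hfg G hpos
  refine ⟨(-G x - G c - m).toNat + 1, ?_⟩
  rintro N hN ⟨s, hs, z, hz, heq⟩
  have hz0 : G z = 0 := closure_apply_eq_zero B G hB0 z hz
  have hGs : m ≤ G s := hm s hs
  have hG : G (-(x + N • z₀) - c) = G s + G z := by rw [heq, map_add]
  rw [map_sub, map_neg, map_add, map_nsmul, nsmul_eq_mul] at hG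
  have hsm : (N : ℤ) ≤ (N : ℤ) * G z₀ :=
    le_mul_of_one_le_right (Int.natCast_nonneg N) hz₀
  have hN' : ((-G x - G c - m).toNat + 1 : ℤ) ≤ (N : ℤ) := by exact_mod_cast hN
  have hself : -G x - G c - m ≤ ((-G x - G c - m).toNat : ℤ) := Int.self_le_toNat _
  linarith

private lemma tri (A B : Finset (Zd d)) (F G : Zd d →+ ℤ) (hF : IsFacetFn A F)
    (hBA : B ⊆ A) (hzero : ∀ a ∈ A, (G a = 0 ↔ a ∈ B)) :
    (∃ a₀ ∈ facetSet A F, G a₀ ≠ 0) ∨ B = facetSet A F ∨ (∀ w, G w = 0) := by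
  by_cases h1 : ∃ a₀ ∈ facetSet A F, G a₀ ≠ 0
  · exact Or.inl h1
  push_neg at h1
  have hσB : facetSet A F ⊆ B := fun a ha =>
    (hzero a (Finset.filter_subset _ _ ha)).mp (h1 a ha)
  by_cases h2 : ∀ a ∈ B, F a = 0
  · refine Or.inr (Or.inl (Finset.Subset.antisymm (fun a ha => ?_) hσB))
    exact Finset.mem_filter.mpr ⟨hBA ha, h2 a ha⟩
  push_neg at h2
  obtain ⟨a₁, ha₁, hFa₁⟩ := h2
  refine Or.inr (Or.inr ?_)
  -- the real span of B is everything, so G vanishes identically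
  have hcoe : {a : Zd d | a ∈ A ∧ F a = 0} = ((facetSet A F : Finset (Zd d)) : Set (Zd d)) := by
    ext a; simp [facetSet]
  have hFr0 : ∀ a ∈ facetSet A F, extR F (toR a) = 0 := by
    intro a ha
    rw [extR_toR]
    exact_mod_cast congrArg (fun t : ℤ => (t : ℝ)) (Finset.mem_filter.mp ha).2
  have hle : Submodule.span ℝ (toR '' ((facetSet A F : Finset (Zd d)) : Set (Zd d))) ≤
      LinearMap.ker (extR F) := by
    rw [Submodule.span_le]
    rintro - ⟨a, ha, rfl⟩
    exact LinearMap.mem_ker.mpr (hFr0 a ha)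
  obtain ⟨v, hv⟩ := hF.2.1 1
  have hvr : extR F (toR v) = 1 := by rw [extR_toR, hv]; norm_num
  have hkerrank : Module.finrank ℝ (LinearMap.ker (extR F)) = d - 1 := by
    have hrange : LinearMap.range (extR F) = ⊤ := by
      rw [LinearMap.range_eq_top]
      intro c; exact ⟨c • toR v, by simp [hvr]⟩
    have h1 := (extR F).finrank_range_add_finrank_ker
    rw [hrange, finrank_top] at h1
    simp [Module.finrank_self, Module.finrank_pi] at h1
    omega
  have hspan : Submodule.span ℝ (toR '' ((facetSet A F : Finset (Zd d)) : Set (Zd d))) =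
      LinearMap.ker (extR F) := by
    refine Submodule.eq_of_le_of_finrank_eq hle ?_
    rw [hkerrank]
    have := hF.2.2
    rw [hcoe] at this
    exact this
  have hGB : ∀ a ∈ B, G a = 0 := fun a ha => (hzero a (hBA ha)).mpr ha
  have hGr0 : ∀ w ∈ LinearMap.ker (extR F), extR G w = 0 := by
    intro w hw
    have h3 : Submodule.span ℝ (toR '' (B : Set (Zd d))) ≤ LinearMap.ker (extR G) := by
      rw [Submodule.span_le]
      rintro - ⟨a, ha, rfl⟩
      refine LinearMap.mem_ker.mpr ?_
      rw [extR_toR, hGB a ha]; norm_num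
    have h4 : Submodule.span ℝ (toR '' ((facetSet A F : Finset (Zd d)) : Set (Zd d))) ≤
        Submodule.span ℝ (toR '' (B : Set (Zd d))) :=
      Submodule.span_mono (Set.image_mono (by exact_mod_cast hσB))
    exact h3 (h4 (hspan ▸ hw))
  have hu0 : extR F (toR a₁) ≠ 0 := by
    rw [extR_toR]; exact_mod_cast hFa₁
  have hGa₁ : extR G (toR a₁) = 0 := by
    rw [extR_toR, hGB a₁ ha₁]; norm_num
  intro w
  set u := toR a₁
  have hker : toR w - (extR F (toR w) / extR F u) • u ∈ LinearMap.ker (extR F) := by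
    rw [LinearMap.mem_ker, map_sub, map_smul, smul_eq_mul, div_mul_cancel₀ _ hu0, sub_self]
  have h5 := hGr0 _ hker
  rw [map_sub, map_smul, smul_eq_mul, hGa₁, mul_zero, sub_zero, extR_toR] at h5
  exact_mod_cast h5

/-- Lemma 5.8. For a facet `σ` (with `B = A ∩ σ`) and
`λ ∈ ℤ^d ∩ Kσ`: `λ ∈ E(ω(S))_σ(−a)` iff `b_σ − λ ∉ E(S)_σ(a)`. Equivalently,
`ℤ^d` is the disjoint union of `ω(S) + ℤ(A∩σ)` and `−[b_σ + S + ℤ(A∩σ)]`. -/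
theorem omegaS_facet_duality {d m : ℕ}
    (A : Finset (Zd d)) (Sc S : Set (Zd d))
    (b : Fin m → Zd d) (Bf : Fin m → Finset (Zd d))
    (hset : Setting A Sc S b Bf) (hirr : Irredundant Sc S b Bf)
    (hSna : IsNASet A S)
    (bt : Finset (Zd d) → Zd d) (hbt : MemB A b Bf bt)
    (F : Zd d →+ ℤ) (hF : IsFacetFn A F) :
    (∀ a lam : Zd d,
        toR lam ∈ Submodule.span ℝ (toR '' ((facetSet A F : Set (Zd d)))) →
        (-a - lam ∈ plusZ (omegaS A S Bf bt) (facetSet A F) ↔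
          a - (bt (facetSet A F) - lam) ∉ plusZ S (facetSet A F))) ∧
    (∀ x : Zd d,
        x ∈ plusZ (omegaS A S Bf bt) (facetSet A F) ↔
          ¬ ∃ s ∈ S, ∃ z ∈ AddSubgroup.closure ((facetSet A F : Set (Zd d))),
              -x = bt (facetSet A F) + s + z) := by
  have key2 : ∀ x : Zd d,
      x ∈ plusZ (omegaS A S Bf bt) (facetSet A F) ↔
        ¬ ∃ s ∈ S, ∃ z ∈ AddSubgroup.closure ((facetSet A F : Set (Zd d))),
            -x = bt (facetSet A F) + s + z := by
    intro x
    set σ := facetSet A F with hσdef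
    have hσF : InFtilde A Bf σ := Or.inl ⟨F, hF, rfl⟩
    constructor
    · rintro ⟨a, ha, z₁, hz₁, rfl⟩ ⟨s, hs, z, hz, heq⟩
      exact ha σ hσF ⟨s, hs, z + z₁, AddSubgroup.add_mem _ hz hz₁, by linear_combination heq⟩
    · intro h
      by_cases hSe : S = ∅
      · refine ⟨x, ?_, 0, AddSubgroup.zero_mem _, (add_zero x).symm⟩
        rintro B hB ⟨s, hs, -⟩
        rw [hSe] at hs; exact hs
      have hSne : S.Nonempty := Set.nonempty_iff_ne_empty.mpr hSe
      have hSSc : S ⊆ Sc := by rw [hset.expr]; exact Set.diff_subset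
      set z₀ : Zd d := ∑ a ∈ σ, a with hz₀def
      have hz₀mem : z₀ ∈ AddSubgroup.closure (σ : Set (Zd d)) :=
        AddSubgroup.sum_mem _ fun a ha => AddSubgroup.subset_closure ha
      have hσcase : ∀ N : ℕ, -(x + N • z₀) - bt σ ∉ plusZ S σ := by
        rintro N ⟨s, hs, z, hz, heq⟩
        exact h ⟨s, hs, z + N • z₀,
          AddSubgroup.add_mem _ hz (nsmul_mem hz₀mem N), by linear_combination heq⟩
      have hz₀pos : ∀ G : Zd d →+ ℤ, (∀ a ∈ A, 0 ≤ G a) →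
          ∀ a₀ ∈ σ, G a₀ ≠ 0 → 1 ≤ G z₀ := by
        intro G hpos a₀ ha₀ hne
        have h0 : G z₀ = ∑ a ∈ σ, G a := map_sum G _ _
        have hnn : ∀ a ∈ σ, 0 ≤ G a := fun a ha => hpos a (Finset.filter_subset _ _ ha)
        have hlt : 0 < G a₀ := lt_of_le_of_ne (hnn a₀ ha₀) (Ne.symm hne)
        have : 0 < ∑ a ∈ σ, G a := Finset.sum_pos' hnn ⟨a₀, ha₀, hlt⟩
        omega
      have key : ∀ B : Finset (Zd d), InFtilde A Bf B →
          ∃ N₀ : ℕ, ∀ N ≥ N₀, -(x + N • z₀) - bt B ∉ plusZ S B := by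
        intro B hB
        obtain ⟨F', hF', rfl⟩ | ⟨i, rfl⟩ := hB
        · have hBA : facetSet A F' ⊆ A := Finset.filter_subset _ _
          have hzero : ∀ a ∈ A, (F' a = 0 ↔ a ∈ facetSet A F') := fun a ha =>
            ⟨fun h0 => Finset.mem_filter.mpr ⟨ha, h0⟩, fun hm => (Finset.mem_filter.mp hm).2⟩
          rcases tri A _ F F' hF hBA hzero with ⟨a₀, ha₀, hGa₀⟩ | hBσ | hall
          · exact eventually_not_mem A Sc S hSSc hset.fg _ F' hF'.1
              (fun a ha => (Finset.mem_filter.mp ha).2) x (bt _) z₀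
              (hz₀pos F' hF'.1 a₀ ha₀ hGa₀)
          · rw [hBσ]; exact ⟨0, fun N _ => hσcase N⟩
          · exfalso
            obtain ⟨v, hv⟩ := hF'.2.1 1
            rw [hall v] at hv
            exact one_ne_zero hv.symm
        · obtain ⟨G, hBA, hpos, hzero⟩ := hset.face i
          rcases tri A _ F G hF hBA hzero with ⟨a₀, ha₀, hGa₀⟩ | hBσ | hall
          · exact eventually_not_mem A Sc S hSSc hset.fg _ G hpos
              (fun a ha => (hzero a (hBA ha)).mpr ha) x (bt _) z₀
              (hz₀pos G hpos a₀ ha₀ hGa₀)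
          · rw [hBσ]; exact ⟨0, fun N _ => hσcase N⟩
          · exfalso
            have hBeq : Bf i = A :=
              Finset.Subset.antisymm hBA fun a ha => (hzero a ha).mp (hall a)
            have hcl : AddSubgroup.closure ((Bf i : Finset (Zd d)) : Set (Zd d)) = ⊤ := by
              rw [hBeq]; exact hset.latt
            obtain ⟨s₀, hs₀⟩ := hSne
            have hs₀' : s₀ ∈ Sc \ ⋃ j, coset (b j) (Bf j) := by
              rw [← hset.expr]; exact hs₀
            refine hs₀'.2 (Set.mem_iUnion.mpr ⟨i, ?_⟩)
            show s₀ - b i ∈ AddSubgroup.closure ((Bf i : Finset (Zd d)) : Set (Zd d))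
            rw [hcl]; trivial
      choose! f hf using key
      set N := A.powerset.sup f with hNdef
      refine ⟨x + N • z₀, ?_, -(N • z₀),
        AddSubgroup.neg_mem _ (nsmul_mem hz₀mem N), by abel⟩
      intro B hB
      have hBA : B ⊆ A := by
        obtain ⟨F', -, rfl⟩ | ⟨i, rfl⟩ := hB
        · exact Finset.filter_subset _ _
        · obtain ⟨G, h1, -, -⟩ := hset.face i; exact h1
      exact hf B hB N (Finset.le_sup (Finset.mem_powerset.mpr hBA))
  refine ⟨?_, key2⟩
  intro a lam _
  rw [key2 (-a - lam)]
  constructor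
  · rintro hn ⟨s, hs, z, hz, heq⟩
    exact hn ⟨s, hs, z, hz, by linear_combination heq⟩
  · rintro hn ⟨s, hs, z, hz, heq⟩
    exact hn ⟨s, hs, z, hz, by linear_combination heq⟩

end SaitoTakahashi
end
end
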